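/- arXiv:cs/0306106 — 12 statements merged into one kernel-verified Lean document; each statement's English description precedes it below -/
import Mathlib

section
/- In a conditional probability space satisfying CP1–CP3 whose conditioning family F' is closed under finite unions, the relation U ≤ V defined on F' by μ(U | U ∪ V) > 0 is transitive. -/
/-- A conditional probability space over `(W, F)` satisfying CP1–CP3. -/
structure CPS {W : Type*} (F F' : Set (Set W)) (μ : Set W → Set W → ℝ) : Prop where
  univ_mem : Set.univ ∈ F
  compl_mem : ∀ ⦃U⦄, U ∈ F → Uᶜ ∈ F
  union_mem : ∀ ⦃U V⦄, U ∈ F → V ∈ F → U ∪ V ∈ F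
  subset : F' ⊆ F
  nonempty : F'.Nonempty
  empty_not_mem : (∅ : Set W) ∉ F'
  nonneg : ∀ V ∈ F, ∀ U ∈ F', 0 ≤ μ V U
  le_one : ∀ V ∈ F, ∀ U ∈ F', μ V U ≤ 1
  cp1 : ∀ U ∈ F', μ U U = 1
  cp2 : ∀ V₁ ∈ F, ∀ V₂ ∈ F, ∀ U ∈ F', Disjoint V₁ V₂ → μ (V₁ ∪ V₂) U = μ V₁ U + μ V₂ U
  cp3 : ∀ V ∈ F, ∀ X ∈ F', ∀ U ∈ F', V ⊆ X → X ⊆ U → μ V U = μ V X * μ X U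

/-- The relation `U ≤ V` on `F'` defined by `μ(U | U ∪ V) > 0`. -/
def leRel {W : Type*} (μ : Set W → Set W → ℝ) (U V : Set W) : Prop :=
  0 < μ U (U ∪ V)

/-- In a conditional probability space satisfying CP1–CP3 whose conditioning family `F'`
is closed under finite unions, the relation `U ≤ V` on `F'` defined by `μ(U | U ∪ V) > 0`
is transitive. -/
theorem stmt1 {W : Type*} {F F' : Set (Set W)} {μ : Set W → Set W → ℝ}
    (h : CPS F F' μ) (hcup : ∀ U ∈ F', ∀ V ∈ F', U ∪ V ∈ F') :
    ∀ U ∈ F', ∀ V ∈ F', ∀ X ∈ F',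
      leRel μ U V → leRel μ V X → leRel μ U X := by
  intro U hU V hV X hX hUV hVX
  have hUF := h.subset hU
  have hVF := h.subset hV
  have hXF := h.subset hX
  -- F is closed under set difference
  have hdiff : ∀ A B : Set W, A ∈ F → B ∈ F → A \ B ∈ F := by
    intro A B hA hB
    have e : A \ B = (Aᶜ ∪ B)ᶜ := by ext x; simp [Set.diff_eq]
    rw [e]; exact h.compl_mem (h.union_mem (h.compl_mem hA) hB)
  -- monotonicity
  have mono : ∀ A B T : Set W, A ∈ F → B ∈ F → T ∈ F' → A ⊆ B → μ A T ≤ μ B T := by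
    intro A B T hA hB hT hAB
    have hBA : B \ A ∈ F := hdiff B A hB hA
    have e : B = A ∪ (B \ A) := (Set.union_diff_cancel hAB).symm
    have := h.cp2 A hA (B \ A) hBA T hT Set.disjoint_sdiff_right
    rw [e, this]
    have := h.nonneg (B \ A) hBA T hT
    linarith
  -- subadditivity
  have subadd : ∀ A B T : Set W, A ∈ F → B ∈ F → T ∈ F' → μ (A ∪ B) T ≤ μ A T + μ B T := by
    intro A B T hA hB hT
    have hBA : B \ A ∈ F := hdiff B A hB hA
    have e : A ∪ B = A ∪ (B \ A) := by simp
    rw [e, h.cp2 A hA (B \ A) hBA T hT Set.disjoint_sdiff_right]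
    have := mono (B \ A) B T hBA hB hT Set.diff_subset
    linarith
  set T : Set W := (U ∪ V) ∪ X with hTdef
  have hUVF' : U ∪ V ∈ F' := hcup U hU V hV
  have hVXF' : V ∪ X ∈ F' := hcup V hV X hX
  have hUXF' : U ∪ X ∈ F' := hcup U hU X hX
  have hT : T ∈ F' := hcup (U ∪ V) hUVF' X hX
  have hTF : T ∈ F := h.subset hT
  have hUVF : U ∪ V ∈ F := h.subset hUVF'
  have hVXF : V ∪ X ∈ F := h.subset hVXF'
  have hUXF : U ∪ X ∈ F := h.subset hUXF'
  have sUV : U ∪ V ⊆ T := Set.subset_union_left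
  have sVX : V ∪ X ⊆ T := by
    intro x hx; rcases hx with hx | hx
    · exact Or.inl (Or.inr hx)
    · exact Or.inr hx
  have sUX : U ∪ X ⊆ T := by
    intro x hx; rcases hx with hx | hx
    · exact Or.inl (Or.inl hx)
    · exact Or.inr hx
  have eq1 : μ U T = μ U (U ∪ V) * μ (U ∪ V) T :=
    h.cp3 U hUF (U ∪ V) hUVF' T hT Set.subset_union_left sUV
  have eq2 : μ V T = μ V (V ∪ X) * μ (V ∪ X) T :=
    h.cp3 V hVF (V ∪ X) hVXF' T hT Set.subset_union_left sVX
  have eq3 : μ U T = μ U (U ∪ X) * μ (U ∪ X) T :=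
    h.cp3 U hUF (U ∪ X) hUXF' T hT Set.subset_union_left sUX
  have hTT : μ T T = 1 := h.cp1 T hT
  -- claim: μ (U ∪ V) T > 0
  have huvT : 0 < μ (U ∪ V) T := by
    rcases lt_or_eq_of_le (h.nonneg (U ∪ V) hUVF T hT) with hpos | heq
    · exact hpos
    · exfalso
      have hU0 : μ U T = 0 := by rw [eq1, ← heq]; ring
      have hV0 : μ V T = 0 := by
        have h1 := mono V (U ∪ V) T hVF hUVF hT Set.subset_union_right
        have h2 := h.nonneg V hVF T hT
        linarith [heq.symm ▸ h1]
      have hVX0 : μ (V ∪ X) T = 0 := by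
        have := eq2
        rw [hV0] at this
        have hb := hVX
        unfold leRel at hb
        have hnn := h.nonneg (V ∪ X) hVXF T hT
        nlinarith
      have hX0 : μ X T = 0 := by
        have h1 := mono X (V ∪ X) T hXF hVXF hT Set.subset_union_right
        have h2 := h.nonneg X hXF T hT
        linarith
      have hs := subadd (U ∪ V) X T hUVF hXF hT
      rw [← hTdef] at hs
      rw [hTT, ← heq, hX0] at hs
      linarith
  have hUT : 0 < μ U T := by
    unfold leRel at hUV
    rw [eq1]; positivity
  have huxT : 0 < μ (U ∪ X) T :=
    lt_of_lt_of_le hUT (mono U (U ∪ X) T hUF hUXF hT Set.subset_union_left)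
  unfold leRel
  nlinarith [eq3, hUT, huxT, h.nonneg U hUF (U ∪ X) hUXF']
end

section
/- In a conditional probability space satisfying CP1–CP3 whose conditioning family F' is closed under finite unions, the relation U ∼ V, defined by μ(U | U ∪ V) > 0 and μ(V | U ∪ V) > 0, is an equivalence relation on F'. -/
/-- `U ∼ V` iff `U ≤ V` and `V ≤ U`, i.e. `μ(U | U ∪ V) > 0` and `μ(V | U ∪ V) > 0`. -/
def simRel {W : Type*} (μ : Set W → Set W → ℝ) (U V : Set W) : Prop :=
  leRel μ U V ∧ leRel μ V U

section aux
variable {W : Type*} {F F' : Set (Set W)} {μ : Set W → Set W → ℝ}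

lemma CPS.diff_mem (h : CPS F F' μ) {U V : Set W} (hU : U ∈ F) (hV : V ∈ F) :
    U \ V ∈ F := by
  have := h.compl_mem (h.union_mem (h.compl_mem hU) hV)
  rwa [Set.compl_union, compl_compl, ← Set.diff_eq] at this

lemma CPS.mono (h : CPS F F' μ) {V₁ V₂ U : Set W} (h1 : V₁ ∈ F) (h2 : V₂ ∈ F)
    (hU : U ∈ F') (hsub : V₁ ⊆ V₂) : μ V₁ U ≤ μ V₂ U := by
  have hd : V₂ = V₁ ∪ (V₂ \ V₁) := (Set.union_diff_cancel hsub).symm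
  have := h.cp2 V₁ h1 (V₂ \ V₁) (h.diff_mem h2 h1) U hU Set.disjoint_sdiff_right
  have hn := h.nonneg (V₂ \ V₁) (h.diff_mem h2 h1) U hU
  rw [← hd] at this
  linarith

end aux

/-- In a conditional probability space satisfying CP1–CP3 whose conditioning family `F'`
is closed under finite unions, the relation `∼` is an equivalence relation on `F'`:
reflexive, symmetric, and transitive. -/
theorem stmt2 {W : Type*} {F F' : Set (Set W)} {μ : Set W → Set W → ℝ}
    (h : CPS F F' μ) (hcup : ∀ U ∈ F', ∀ V ∈ F', U ∪ V ∈ F') :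
    (∀ U ∈ F', simRel μ U U) ∧
    (∀ U ∈ F', ∀ V ∈ F', simRel μ U V → simRel μ V U) ∧
    (∀ U ∈ F', ∀ V ∈ F', ∀ X ∈ F', simRel μ U V → simRel μ V X → simRel μ U X) := by
  refine ⟨?_, ?_, ?_⟩
  · intro U hU
    have : μ U (U ∪ U) = 1 := by rw [Set.union_self]; exact h.cp1 U hU
    constructor <;> exact (by show 0 < μ U (U ∪ U); rw [this]; norm_num)
  · intro U hU V hV ⟨h1, h2⟩
    exact ⟨h2, h1⟩
  · intro U hU V hV X hX ⟨hUV, hVU⟩ ⟨hVX, hXV⟩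
    unfold leRel at hUV hVU hVX hXV
    have hUF := h.subset hU; have hVF := h.subset hV; have hXF := h.subset hX
    set A := (U ∪ V) ∪ X with hA
    have hUVm : U ∪ V ∈ F' := hcup U hU V hV
    have hVXm : V ∪ X ∈ F' := hcup V hV X hX
    have hUXm : U ∪ X ∈ F' := hcup U hU X hX
    have hAm : A ∈ F' := hcup _ hUVm X hX
    have hAF := h.subset hAm
    have hUVF := h.subset hUVm
    have hVXF := h.subset hVXm
    have hUXF := h.subset hUXm
    -- subadditivity: μ(U∪V|A) + μ(V∪X|A) ≥ 1
    have hcover : (U ∪ V) ∪ ((V ∪ X) \ (U ∪ V)) = A := by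
      rw [Set.union_diff_self]
      rw [hA]; ext w; simp; tauto
    have hsplit := h.cp2 (U ∪ V) hUVF ((V ∪ X) \ (U ∪ V))
      (h.diff_mem hVXF hUVF) A hAm Set.disjoint_sdiff_right
    rw [hcover, h.cp1 A hAm] at hsplit
    have hdle : μ ((V ∪ X) \ (U ∪ V)) A ≤ μ (V ∪ X) A :=
      h.mono (h.diff_mem hVXF hUVF) hVXF hAm Set.diff_subset
    -- hence one of the two is positive
    have hpos : 0 < μ (U ∪ V) A ∨ 0 < μ (V ∪ X) A := by
      by_contra hc
      push_neg at hc
      have h1 := h.nonneg (U ∪ V) hUVF A hAm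
      have h2 := h.nonneg (V ∪ X) hVXF A hAm
      nlinarith
    have hUVA : U ∪ V ⊆ A := Set.subset_union_left
    have hVXA : V ∪ X ⊆ A := by rw [hA]; intro w hw; rcases hw with hw | hw
      <;> simp [hw]
    have hUXA : U ∪ X ⊆ A := by rw [hA]; intro w hw; rcases hw with hw | hw
      <;> simp [hw]
    -- μ(V|A) > 0 in either case
    have hVA : 0 < μ V A := by
      rcases hpos with hp | hp
      · have := h.cp3 V hVF (U ∪ V) hUVm A hAm Set.subset_union_right hUVA
        rw [this]; exact mul_pos (by rwa [Set.union_comm] at hVU) hp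
      · have := h.cp3 V hVF (V ∪ X) hVXm A hAm Set.subset_union_left hVXA
        rw [this]; exact mul_pos hVX hp
    have hUVpos : 0 < μ (U ∪ V) A :=
      lt_of_lt_of_le hVA (h.mono hVF hUVF hAm Set.subset_union_right)
    have hVXpos : 0 < μ (V ∪ X) A :=
      lt_of_lt_of_le hVA (h.mono hVF hVXF hAm Set.subset_union_left)
    have hUA : 0 < μ U A := by
      have := h.cp3 U hUF (U ∪ V) hUVm A hAm Set.subset_union_left hUVA
      rw [this]; exact mul_pos hUV hUVpos
    have hXA : 0 < μ X A := by
      have := h.cp3 X hXF (V ∪ X) hVXm A hAm Set.subset_union_right hVXA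
      rw [this]; exact mul_pos (by rwa [Set.union_comm] at hXV) hVXpos
    have keyU := h.cp3 U hUF (U ∪ X) hUXm A hAm Set.subset_union_left hUXA
    have keyX := h.cp3 X hXF (U ∪ X) hUXm A hAm Set.subset_union_right hUXA
    have hUXApos := h.nonneg (U ∪ X) hUXF A hAm
    have hU0 := h.nonneg U hUF (U ∪ X) hUXm
    have hX0 := h.nonneg X hXF (U ∪ X) hUXm
    constructor
    · show 0 < μ U (U ∪ X); nlinarith
    · show 0 < μ X (X ∪ U); rw [Set.union_comm]; nlinarith
end

section
/- In a countably additive Popper space, each ∼-equivalence class of conditioning events is closed under countable unions: if V₁, V₂, … all lie in the same ∼-class [V], then ⋃ᵢ Vᵢ ∈ [V]. -/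
/-- A countably additive Popper space over `(W, F)`: `F` is a σ-algebra of subsets of `W`,
`F'` ⊆ `F` does not contain `∅`, is closed under supersets in `F`, satisfies the regularity
condition that `μ(V | U) ≠ 0` with `U ∈ F'` implies `V ∩ U ∈ F'`, and `μ` satisfies CP1–CP3
and is countably additive in its first argument. -/
structure Popper {W : Type*} (F F' : Set (Set W)) (μ : Set W → Set W → ℝ) : Prop where
  univ_mem : Set.univ ∈ F
  compl_mem : ∀ ⦃U⦄, U ∈ F → Uᶜ ∈ F
  iUnion_mem : ∀ s : ℕ → Set W, (∀ n, s n ∈ F) → (⋃ n, s n) ∈ F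
  subset : F' ⊆ F
  empty_not_mem : (∅ : Set W) ∉ F'
  superset_closed : ∀ ⦃U V⦄, U ∈ F' → U ⊆ V → V ∈ F → V ∈ F'
  cond_closed : ∀ ⦃U V⦄, U ∈ F' → V ∈ F → μ V U ≠ 0 → V ∩ U ∈ F'
  nonneg : ∀ V ∈ F, ∀ U ∈ F', 0 ≤ μ V U
  le_one : ∀ V ∈ F, ∀ U ∈ F', μ V U ≤ 1
  cp1 : ∀ U ∈ F', μ U U = 1
  cp2 : ∀ V₁ ∈ F, ∀ V₂ ∈ F, ∀ U ∈ F', Disjoint V₁ V₂ → μ (V₁ ∪ V₂) U = μ V₁ U + μ V₂ U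
  cp3 : ∀ V ∈ F, ∀ X ∈ F', ∀ U ∈ F', V ⊆ X → X ⊆ U → μ V U = μ V X * μ X U
  countably_additive : ∀ V : ℕ → Set W, (∀ n, V n ∈ F) → Pairwise (Function.onFun Disjoint V) →
    ∀ U ∈ F', HasSum (fun n => μ (V n) U) (μ (⋃ n, V n) U)

/-
Since `μ(A ∪ B | A ∪ B) = 1` splits as `μ(A | A ∪ B) + μ(B \ A | A ∪ B)`, the relation `≤` is
total. Put `U = ⋃ Vₙ` and `X = U ∪ V₀`. If `μ(U | X) > 0` then, by countable additivity, some
`μ(Vₙ | X) > 0`, and `V₀ ≤ Vₙ` passes this positivity on to `μ(V₀ | X)` through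
`μ(V₀ | X) = μ(V₀ | V₀ ∪ Vₙ) μ(V₀ ∪ Vₙ | X)`. Symmetrically, `μ(V₀ | X) > 0` and `Vₙ ≤ V₀`
give `μ(Vₙ | X) > 0`, hence `μ(U | X) > 0`. By totality one of the two cases occurs.
-/

namespace Popper

variable {W : Type*} {F F' : Set (Set W)} {μ : Set W → Set W → ℝ}

/-- Lets the library's closure properties of measurable sets apply to `F`. -/
abbrev measurableSpace (h : Popper F F' μ) : MeasurableSpace W where
  MeasurableSet' := (· ∈ F)
  measurableSet_empty := by simpa using h.compl_mem h.univ_mem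
  measurableSet_compl := h.compl_mem
  measurableSet_iUnion := h.iUnion_mem

lemma union_mem (h : Popper F F' μ) {A B : Set W} (hA : A ∈ F) (hB : B ∈ F) : A ∪ B ∈ F :=
  @MeasurableSet.union W h.measurableSpace A B hA hB

lemma diff_mem (h : Popper F F' μ) {A B : Set W} (hA : A ∈ F) (hB : B ∈ F) : A \ B ∈ F :=
  @MeasurableSet.diff W h.measurableSpace A B hA hB

lemma disjointed_mem (h : Popper F F' μ) {s : ℕ → Set W} (hs : ∀ n, s n ∈ F) (n : ℕ) :
    disjointed s n ∈ F :=
  @MeasurableSet.disjointed W h.measurableSpace s hs n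

lemma union_mem_left (h : Popper F F' μ) {A B : Set W} (hA : A ∈ F') (hB : B ∈ F) :
    A ∪ B ∈ F' :=
  h.superset_closed hA Set.subset_union_left (h.union_mem (h.subset hA) hB)

lemma mono (h : Popper F F' μ) {A B U : Set W} (hA : A ∈ F) (hB : B ∈ F) (hU : U ∈ F')
    (hAB : A ⊆ B) : μ A U ≤ μ B U := by
  have hBA := h.diff_mem hB hA
  have hsplit := h.cp2 A hA (B \ A) hBA U hU Set.disjoint_sdiff_right
  rw [Set.union_sdiff_cancel hAB] at hsplit
  linarith [h.nonneg _ hBA U hU]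

lemma iUnion_eq_zero (h : Popper F F' μ) {s : ℕ → Set W} (hs : ∀ n, s n ∈ F) {U : Set W}
    (hU : U ∈ F') (hzero : ∀ n, μ (s n) U = 0) : μ (⋃ n, s n) U = 0 := by
  have hdisj : ∀ n, μ (disjointed s n) U = 0 := fun n =>
    le_antisymm (hzero n ▸ h.mono (h.disjointed_mem hs n) (hs n) hU (disjointed_le s n))
      (h.nonneg _ (h.disjointed_mem hs n) U hU)
  have hsum := h.countably_additive _ (h.disjointed_mem hs) (disjoint_disjointed s) U hU
  rw [iUnion_disjointed] at hsum
  exact hsum.unique (by simpa only [hdisj] using hasSum_zero)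

lemma exists_pos_of_iUnion_pos (h : Popper F F' μ) {s : ℕ → Set W} (hs : ∀ n, s n ∈ F)
    {U : Set W} (hU : U ∈ F') (hpos : 0 < μ (⋃ n, s n) U) : ∃ n, 0 < μ (s n) U := by
  by_contra! hle
  exact hpos.ne' <| h.iUnion_eq_zero hs hU fun n =>
    le_antisymm (hle n) (h.nonneg _ (hs n) U hU)

lemma leRel_total (h : Popper F F' μ) {A B : Set W} (hA : A ∈ F) (hB : B ∈ F)
    (hAB : A ∪ B ∈ F') : leRel μ A B ∨ leRel μ B A := by
  have hBA := h.diff_mem hB hA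
  have hsplit := h.cp2 A hA (B \ A) hBA _ hAB Set.disjoint_sdiff_right
  rw [Set.union_sdiff_self, h.cp1 _ hAB] at hsplit
  by_contra! hnot
  simp only [leRel, not_lt, Set.union_comm B A] at hnot
  linarith [h.mono hBA hB hAB Set.sdiff_subset]

lemma pos_of_leRel (h : Popper F F' μ) {A B X : Set W} (hA : A ∈ F') (hB : B ∈ F)
    (hX : X ∈ F') (hAX : A ⊆ X) (hBX : B ⊆ X) (hBA : leRel μ B A) (hpos : 0 < μ A X) :
    0 < μ B X := by
  have hAB : B ∪ A ∈ F' := Set.union_comm A B ▸ h.union_mem_left hA hB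
  rw [h.cp3 B hB (B ∪ A) hAB X hX Set.subset_union_left (Set.union_subset hBX hAX)]
  exact mul_pos hBA <| hpos.trans_le <|
    h.mono (h.subset hA) (h.subset hAB) hX Set.subset_union_right

end Popper

/-- In a countably additive Popper space, each `∼`-equivalence class of conditioning events
is closed under countable unions: if `V₁, V₂, …` all lie in the same `∼`-class as `V₀`,
then `⋃ᵢ Vᵢ` lies in that class as well. -/
theorem stmt3 {W : Type*} {F F' : Set (Set W)} {μ : Set W → Set W → ℝ}
    (h : Popper F F' μ) (V₀ : Set W) (hV₀ : V₀ ∈ F')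
    (V : ℕ → Set W) (hV : ∀ n, V n ∈ F') (hsim : ∀ n, simRel μ (V n) V₀) :
    (⋃ n, V n) ∈ F' ∧ simRel μ (⋃ n, V n) V₀ := by
  have hVF : ∀ n, V n ∈ F := fun n => h.subset (hV n)
  have hV₀F : V₀ ∈ F := h.subset hV₀
  have hUF : (⋃ n, V n) ∈ F := h.iUnion_mem _ hVF
  have hUF' : (⋃ n, V n) ∈ F' := h.superset_closed (hV 0) (Set.subset_iUnion V 0) hUF
  have hXF' : (⋃ n, V n) ∪ V₀ ∈ F' := h.union_mem_left hUF' hV₀F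
  have hVX : ∀ n, V n ⊆ (⋃ n, V n) ∪ V₀ := fun n =>
    (Set.subset_iUnion V n).trans Set.subset_union_left
  have hV₀X : V₀ ⊆ (⋃ n, V n) ∪ V₀ := Set.subset_union_right
  have hV₀_of_U : leRel μ (⋃ n, V n) V₀ → 0 < μ V₀ ((⋃ n, V n) ∪ V₀) := fun hU =>
    let ⟨n, hn⟩ := h.exists_pos_of_iUnion_pos hVF hXF' hU
    h.pos_of_leRel (hV n) hV₀F hXF' (hVX n) hV₀X (hsim n).2 hn
  have hU_of_V₀ : 0 < μ V₀ ((⋃ n, V n) ∪ V₀) → leRel μ (⋃ n, V n) V₀ := fun h₀ =>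
    (h.pos_of_leRel hV₀ (hVF 0) hXF' hV₀X (hVX 0) (hsim 0).1 h₀).trans_le
      (h.mono (hVF 0) hUF hXF' (Set.subset_iUnion V 0))
  have hcomm : leRel μ V₀ (⋃ n, V n) ↔ 0 < μ V₀ ((⋃ n, V n) ∪ V₀) := by
    rw [leRel, Set.union_comm]
  refine ⟨hUF', ?_⟩
  rcases h.leRel_total hUF hV₀F hXF' with hU | h₀
  · exact ⟨hU, hcomm.2 (hV₀_of_U hU)⟩
  · exact ⟨hU_of_V₀ (hcomm.1 h₀), h₀⟩
end

section
/- In a countably additive Popper space, the strict order on ∼-equivalence classes of conditioning events, defined by [U] < [V] iff U ≤ V and not V ≤ U, is well-founded: there is no infinite strictly decreasing sequence [U₀] > [U₁] > [U₂] > …. -/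
/-!
Let `S = ⋃ n, U n`. Since `¬ U n ≤ U (n+1)`, CP3 through `U n ∪ U (n+1) ⊆ S` gives
`μ(U n | S) = 0` for every `n`. But `μ(· | S)` is a measure on `(W, F)`, so the countable union
`S` of null sets is null, contradicting `μ(S | S) = 1`.
-/

open MeasureTheory

namespace Popper

variable {W : Type*} {F F' : Set (Set W)} {μ : Set W → Set W → ℝ}

theorem empty_mem (h : Popper F F' μ) : (∅ : Set W) ∈ F := by
  simpa using h.compl_mem h.univ_mem

abbrev toMeasurableSpace (h : Popper F F' μ) : MeasurableSpace W where
  MeasurableSet' := (· ∈ F)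
  measurableSet_empty := h.empty_mem
  measurableSet_compl := h.compl_mem
  measurableSet_iUnion := h.iUnion_mem

theorem cond_empty (h : Popper F F' μ) {U : Set W} (hU : U ∈ F') : μ ∅ U = 0 := by
  have := h.cp2 ∅ h.empty_mem ∅ h.empty_mem U hU (Set.disjoint_empty _)
  rw [Set.empty_union] at this
  linarith

noncomputable def condMeasure (h : Popper F F' μ) {U : Set W} (hU : U ∈ F') :
    @Measure W h.toMeasurableSpace :=
  @Measure.ofMeasurable W h.toMeasurableSpace (fun V _ => ENNReal.ofReal (μ V U))
    (by simp [h.cond_empty hU])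
    (fun V hV hdisj => by
      rw [(h.countably_additive V hV hdisj U hU).tsum_eq.symm,
        ENNReal.ofReal_tsum_of_nonneg (fun n => h.nonneg _ (hV n) U hU)
          (h.countably_additive V hV hdisj U hU).summable])

theorem condMeasure_apply (h : Popper F F' μ) {U V : Set W} (hU : U ∈ F') (hV : V ∈ F) :
    h.condMeasure hU V = ENNReal.ofReal (μ V U) :=
  @Measure.ofMeasurable_apply W h.toMeasurableSpace _ _ _ V hV

theorem cond_eq_zero_of_not_leRel (h : Popper F F' μ) {U V X : Set W} (hV : V ∈ F')
    (hU : U ∈ F) (hX : X ∈ F') (hUX : U ⊆ X) (hVX : V ⊆ X) (hVU : ¬ leRel μ V U) :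
    μ V X = 0 := by
  have hVF : V ∈ F := h.subset hV
  have hVU' : V ∪ U ∈ F' :=
    h.superset_closed hV Set.subset_union_left
      (@MeasurableSet.union W h.toMeasurableSpace _ _ hVF hU)
  have hzero : μ V (V ∪ U) = 0 :=
    le_antisymm (not_lt.1 hVU) (h.nonneg V hVF _ hVU')
  rw [h.cp3 V hVF _ hVU' X hX Set.subset_union_left (Set.union_subset hVX hUX), hzero,
    zero_mul]

end Popper

/-- In a countably additive Popper space, the strict order on `∼`-equivalence classes of
conditioning events, `[U] < [V]` iff `U ≤ V` and not `V ≤ U`, is well-founded: there is no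
infinite strictly decreasing sequence `[U₀] > [U₁] > [U₂] > …`. -/
theorem stmt6 {W : Type*} {F F' : Set (Set W)} {μ : Set W → Set W → ℝ}
    (h : Popper F F' μ) :
    ¬ ∃ U : ℕ → Set W, (∀ n, U n ∈ F') ∧
      ∀ n, leRel μ (U (n + 1)) (U n) ∧ ¬ leRel μ (U n) (U (n + 1)) := by
  rintro ⟨U, hU, hdec⟩
  have hUF : ∀ n, U n ∈ F := fun n => h.subset (hU n)
  have hS : (⋃ n, U n) ∈ F' :=
    h.superset_closed (hU 0) (Set.subset_iUnion U 0) (h.iUnion_mem U hUF)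
  have hnull : ∀ n, h.condMeasure hS (U n) = 0 := fun n => by
    rw [h.condMeasure_apply hS (hUF n),
      h.cond_eq_zero_of_not_leRel (hU n) (hUF (n + 1)) hS (Set.subset_iUnion U (n + 1))
        (Set.subset_iUnion U n) (hdec n).2, ENNReal.ofReal_zero]
  have hone : h.condMeasure hS (⋃ n, U n) = 1 := by
    rw [h.condMeasure_apply hS (h.subset hS), h.cp1 _ hS, ENNReal.ofReal_one]
  simp [measure_iUnion_null hnull] at hone
end

section
/- Let W = {w₁, w₂, w₃, w₄} and let μ be the conditional probability on 2-element conditioning sets determined by μ(w₁ | {w₁,w₃}) = μ(w₄ | {w₂,w₄}) = 1/3 and μ(w₁ | {w₁,w₂}) = μ(w₄ | {w₃,w₄}) = 1/2 (with the complementary values determined by additivity). Then there is no probability measure μ* on W such that for every 2-element set V with μ*(V) > 0 and every U ⊆ W, μ*(U ∩ V)/μ*(V) = μ(U | V). -/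
/-- Let `W = {w₁, w₂, w₃, w₄}` (here `Fin 4`) and let `μ` be the conditional probability on
2-element conditioning sets determined by `μ(w₁ | {w₁,w₃}) = μ(w₄ | {w₂,w₄}) = 1/3` and
`μ(w₁ | {w₁,w₂}) = μ(w₄ | {w₃,w₄}) = 1/2`, with complementary values determined by
additivity (each `μ(· | V)` being a probability measure concentrated on `V`).  Then there is
no probability measure `μ*` on `W` such that for every 2-element set `V` with `μ*(V) > 0`
and every `U ⊆ W`, `μ*(U ∩ V)/μ*(V) = μ(U | V)`. -/
theorem stmt9 (μ : Finset (Fin 4) → Finset (Fin 4) → ℝ)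
    (hprob : ∀ V : Finset (Fin 4), V.card = 2 →
      (∀ U, 0 ≤ μ U V) ∧ μ V V = 1 ∧ (∀ U, μ U V = μ (U ∩ V) V) ∧
      (∀ U₁ U₂, Disjoint U₁ U₂ → μ (U₁ ∪ U₂) V = μ U₁ V + μ U₂ V))
    (h13 : μ {0} {0, 2} = 1 / 3) (h24 : μ {3} {1, 3} = 1 / 3)
    (h12 : μ {0} {0, 1} = 1 / 2) (h34 : μ {3} {2, 3} = 1 / 2) :
    ¬ ∃ p : Fin 4 → ℝ, (∀ i, 0 ≤ p i) ∧ (∑ i, p i = 1) ∧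
      ∀ V : Finset (Fin 4), V.card = 2 → 0 < ∑ i ∈ V, p i →
        ∀ U : Finset (Fin 4), (∑ i ∈ U ∩ V, p i) / (∑ i ∈ V, p i) = μ U V := by
  rintro ⟨p, hpos, hsum, hcond⟩
  have hs : p 0 + p 1 + p 2 + p 3 = 1 := by
    simpa [Fin.sum_univ_four] using hsum
  have e1 : 3 * p 0 = p 0 + p 2 := by
    rcases lt_or_eq_of_le (add_nonneg (hpos 0) (hpos 2)) with h | h
    · have hc := hcond {0,2} (by decide)
        (by simpa [Finset.sum_pair (show (0:Fin 4) ≠ 2 by decide)] using h) {0}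
      rw [h13, show ({0} : Finset (Fin 4)) ∩ {0,2} = {0} by decide] at hc
      simp [Finset.sum_pair (show (0:Fin 4) ≠ 2 by decide)] at hc
      have hne : p 0 + p 2 ≠ 0 := ne_of_gt h
      field_simp at hc
      linarith
    · have h0 : p 0 = 0 := le_antisymm (by linarith [hpos 2]) (hpos 0)
      linarith
  have e2 : 3 * p 3 = p 1 + p 3 := by
    rcases lt_or_eq_of_le (add_nonneg (hpos 1) (hpos 3)) with h | h
    · have hc := hcond {1,3} (by decide)
        (by simpa [Finset.sum_pair (show (1:Fin 4) ≠ 3 by decide)] using h) {3}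
      rw [h24, show ({3} : Finset (Fin 4)) ∩ {1,3} = {3} by decide] at hc
      simp [Finset.sum_pair (show (1:Fin 4) ≠ 3 by decide)] at hc
      have hne : p 1 + p 3 ≠ 0 := ne_of_gt h
      field_simp at hc
      linarith
    · have h0 : p 3 = 0 := le_antisymm (by linarith [hpos 1]) (hpos 3)
      linarith
  have e3 : 2 * p 0 = p 0 + p 1 := by
    rcases lt_or_eq_of_le (add_nonneg (hpos 0) (hpos 1)) with h | h
    · have hc := hcond {0,1} (by decide)
        (by simpa [Finset.sum_pair (show (0:Fin 4) ≠ 1 by decide)] using h) {0}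
      rw [h12, show ({0} : Finset (Fin 4)) ∩ {0,1} = {0} by decide] at hc
      simp [Finset.sum_pair (show (0:Fin 4) ≠ 1 by decide)] at hc
      have hne : p 0 + p 1 ≠ 0 := ne_of_gt h
      field_simp at hc
      linarith
    · have h0 : p 0 = 0 := le_antisymm (by linarith [hpos 1]) (hpos 0)
      linarith
  have e4 : 2 * p 3 = p 2 + p 3 := by
    rcases lt_or_eq_of_le (add_nonneg (hpos 2) (hpos 3)) with h | h
    · have hc := hcond {2,3} (by decide)
        (by simpa [Finset.sum_pair (show (2:Fin 4) ≠ 3 by decide)] using h) {3}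
      rw [h34, show ({3} : Finset (Fin 4)) ∩ {2,3} = {3} by decide] at hc
      simp [Finset.sum_pair (show (2:Fin 4) ≠ 3 by decide)] at hc
      have hne : p 2 + p 3 ≠ 0 := ne_of_gt h
      field_simp at hc
      linarith
    · have h0 : p 3 = 0 := le_antisymm (by linarith [hpos 2]) (hpos 3)
      linarith
  linarith
end

section
/- Let W be finite and let ν be a probability measure on W with values in a non-Archimedean ordered field extension of ℝ. Then there exist k ≤ |W|, standard probability measures μ₀, …, μₖ on W, and nonnegative field elements ε₀, …, εₖ with Σεᵢ = 1 and st(εᵢ₊₁/εᵢ) = 0 whenever εᵢ ≠ 0, such that ν = ε₀μ₀ + ⋯ + εₖμₖ. -/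
/-- The standard part of an element of an ordered field extension of `ℝ`. -/
noncomputable def stPart {K : Type*} [Field K] [LinearOrder K] [IsStrictOrderedRing K] (ι : ℝ →+* K) (b : K) : ℝ :=
  sInf {a : ℝ | b ≤ ι a}

section StLemmas
variable {K : Type*} [Field K] [LinearOrder K] [IsStrictOrderedRing K]

lemma st_smono (ι : ℝ →+* K) (hι : Monotone ι) : StrictMono ι :=
  hι.strictMono_of_injective ι.injective

lemma st_uniq (ι : ℝ →+* K) {b : K} {t : ℝ}
    (h : ∀ r : ℝ, 0 < r → ι (t - r) < b ∧ b ≤ ι (t + r)) :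
    stPart ι b = t := by
  have hbdd : BddBelow {a : ℝ | b ≤ ι a} := by
    refine ⟨t, fun a ha => ?_⟩
    by_contra hc
    push_neg at hc
    have := (h (t - a) (by linarith)).1
    simp only [sub_sub_cancel] at this
    exact absurd ha (not_le.mpr this)
  have hne : ({a : ℝ | b ≤ ι a}).Nonempty := ⟨t + 1, (h 1 one_pos).2⟩
  refine le_antisymm ?_ (le_csInf hne fun a ha => ?_)
  · refine le_of_forall_pos_le_add fun r hr => ?_
    exact csInf_le hbdd (h r hr).2
  · by_contra hc
    push_neg at hc
    have := (h (t - a) (by linarith)).1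
    simp only [sub_sub_cancel] at this
    exact absurd ha (not_le.mpr this)

lemma st_char (ι : ℝ →+* K) (hι : Monotone ι) {b : K} (hb0 : 0 ≤ b) {M : ℝ} (hbM : b ≤ ι M) :
    ∀ r : ℝ, 0 < r → ι (stPart ι b - r) < b ∧ b ≤ ι (stPart ι b + r) := by
  intro r hr
  have hne : ({a : ℝ | b ≤ ι a}).Nonempty := ⟨M, hbM⟩
  have hbdd : BddBelow {a : ℝ | b ≤ ι a} := by
    refine ⟨0, fun a ha => ?_⟩
    by_contra hc
    push_neg at hc
    have : ι a < ι 0 := st_smono ι hι hc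
    rw [map_zero] at this
    exact absurd ha (not_le.mpr (lt_of_lt_of_le this hb0))
  constructor
  · by_contra hc
    push_neg at hc
    have : stPart ι b ≤ stPart ι b - r := csInf_le hbdd hc
    linarith
  · have hlt : sInf {a : ℝ | b ≤ ι a} < stPart ι b + r := by
      have : (0:ℝ) < r := hr
      unfold stPart
      linarith
    obtain ⟨a, ha, halt⟩ := exists_lt_of_csInf_lt hne hlt
    exact le_trans ha (hι halt.le)

lemma st_iota (ι : ℝ →+* K) (hι : Monotone ι) (a : ℝ) : stPart ι (ι a) = a :=
  st_uniq ι fun r hr => ⟨st_smono ι hι (by linarith), hι (by linarith)⟩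

lemma st_nonneg (ι : ℝ →+* K) (hι : Monotone ι) {b : K} (hb : 0 ≤ b) : 0 ≤ stPart ι b := by
  apply Real.sInf_nonneg
  intro a ha
  by_contra hc
  push_neg at hc
  have : ι a < ι 0 := st_smono ι hι hc
  rw [map_zero] at this
  exact absurd ha (not_le.mpr (lt_of_lt_of_le this hb))

lemma st_eq_zero (ι : ℝ →+* K) (hι : Monotone ι) {b : K} (hb : 0 ≤ b)
    (h : ∀ r : ℝ, 0 < r → b ≤ ι r) : stPart ι b = 0 := by
  refine st_uniq ι fun r hr => ⟨?_, by simpa using h r hr⟩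
  have : ι (0 - r) < ι 0 := st_smono ι hι (by linarith)
  rw [map_zero] at this
  exact lt_of_lt_of_le this hb

lemma st_add (ι : ℝ →+* K) (hι : Monotone ι) {b c : K} (hb0 : 0 ≤ b) {M : ℝ} (hbM : b ≤ ι M)
    (hc0 : 0 ≤ c) {N : ℝ} (hcN : c ≤ ι N) :
    stPart ι (b + c) = stPart ι b + stPart ι c := by
  refine st_uniq ι fun r hr => ?_
  obtain ⟨h1, h2⟩ := st_char ι hι hb0 hbM (r/2) (by linarith)
  obtain ⟨h3, h4⟩ := st_char ι hι hc0 hcN (r/2) (by linarith)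
  constructor
  · have he : ι (stPart ι b + stPart ι c - r) =
        ι (stPart ι b - r/2) + ι (stPart ι c - r/2) := by
      rw [← map_add]; ring_nf
    rw [he]; exact add_lt_add h1 h3
  · have he : ι (stPart ι b + stPart ι c + r) =
        ι (stPart ι b + r/2) + ι (stPart ι c + r/2) := by
      rw [← map_add]; ring_nf
    rw [he]; exact add_le_add h2 h4

lemma st_sum (ι : ℝ →+* K) (hι : Monotone ι) {W : Type*} (S : Finset W) (f : W → K)
    (h0 : ∀ w ∈ S, 0 ≤ f w) (h1 : ∀ w ∈ S, f w ≤ ι 1) :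
    stPart ι (∑ w ∈ S, f w) = ∑ w ∈ S, stPart ι (f w) := by
  classical
  induction S using Finset.induction with
  | empty => simpa using st_iota ι hι 0
  | @insert a s hx ih =>
    have hsnn : (0:K) ≤ ∑ w ∈ s, f w :=
      Finset.sum_nonneg fun w hw => h0 w (Finset.mem_insert_of_mem hw)
    have hsbd : ∑ w ∈ s, f w ≤ ι (s.card : ℝ) := by
      calc ∑ w ∈ s, f w ≤ ∑ _w ∈ s, ι 1 :=
            Finset.sum_le_sum fun w hw => h1 w (Finset.mem_insert_of_mem hw)
        _ = (s.card : K) := by simp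
        _ = ι (s.card : ℝ) := by rw [map_natCast]
    rw [Finset.sum_insert hx, Finset.sum_insert hx,
      st_add ι hι (h0 a (Finset.mem_insert_self a s)) (h1 a (Finset.mem_insert_self a s))
        hsnn hsbd,
      ih (fun w hw => h0 w (Finset.mem_insert_of_mem hw))
        (fun w hw => h1 w (Finset.mem_insert_of_mem hw))]

end StLemmas

lemma st_main_aux {W : Type*} [Fintype W] {K : Type*} [Field K] [LinearOrder K] [IsStrictOrderedRing K]
    (ι : ℝ →+* K) (hι : Monotone ι) :
    ∀ n : ℕ, ∀ ν : W → K, (∀ w, 0 ≤ ν w) → (∑ w, ν w = 1) →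
    ((Finset.univ : Finset W).filter fun w => ν w ≠ 0).card ≤ n →
    ∃ k, k + 1 ≤ n ∧ ∃ μ : Fin (k + 1) → W → ℝ, ∃ ε : Fin (k + 1) → K,
      (∀ i w, 0 ≤ μ i w) ∧ (∀ i, ∑ w, μ i w = 1) ∧
      (∀ i, 0 ≤ ε i) ∧ (∑ i, ε i = 1) ∧
      (∀ i : Fin k, ε i.castSucc ≠ 0 → stPart ι (ε i.succ / ε i.castSucc) = 0) ∧
      (∀ w, ν w = ∑ i, ε i * ι (μ i w)) := by
  classical
  intro n
  induction n with
  | zero =>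
    intro ν hnn hsum hcard
    exfalso
    have : ∀ w, ν w = 0 := by
      intro w
      by_contra hc
      have : w ∈ (Finset.univ : Finset W).filter fun w => ν w ≠ 0 := by
        simp [hc]
      have := Finset.card_pos.mpr ⟨w, this⟩
      omega
    rw [Finset.sum_congr rfl fun w _ => this w] at hsum
    simp at hsum
  | succ n ih =>
    intro ν hnn hsum hcard
    -- basic bounds
    have hb1 : ∀ w : W, ν w ≤ ι 1 := by
      intro w
      rw [map_one]
      calc ν w ≤ ∑ w, ν w := Finset.single_le_sum (fun w _ => hnn w) (Finset.mem_univ w)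
        _ = 1 := hsum
    set s : W → ℝ := fun w => stPart ι (ν w) with hs_def
    have hs0 : ∀ w, 0 ≤ s w := fun w => st_nonneg ι hι (hnn w)
    have hssum : ∑ w, s w = 1 := by
      have h1 : stPart ι (∑ w, ν w) = ∑ w, s w :=
        st_sum ι hι Finset.univ ν (fun w _ => hnn w) (fun w _ => hb1 w)
      rw [hsum, show (1:K) = ι 1 by rw [map_one], st_iota ι hι 1] at h1
      exact h1.symm
    -- ν w = 0 → s w = 0
    have hνs : ∀ w, ν w = 0 → s w = 0 := by
      intro w hw
      have : s w = stPart ι (ι 0) := by rw [hs_def]; simp [hw]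
      rw [this, st_iota ι hι 0]
    set T : Finset W := (Finset.univ : Finset W).filter fun w => s w ≠ 0 with hT_def
    have hT : T.Nonempty := by
      by_contra hc
      rw [Finset.not_nonempty_iff_eq_empty] at hc
      have : ∀ w : W, s w = 0 := by
        intro w
        by_contra hw
        have : w ∈ T := by simp [hT_def, hw]
        simp [hc] at this
      rw [Finset.sum_congr rfl fun w _ => this w] at hssum
      simp at hssum
    have hsTpos : ∀ w ∈ T, 0 < s w := by
      intro w hw
      simp only [hT_def, Finset.mem_filter] at hw
      exact lt_of_le_of_ne (hs0 w) (Ne.symm hw.2)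
    have hιspos : ∀ w ∈ T, 0 < ι (s w) := by
      intro w hw
      have := st_smono ι hι (hsTpos w hw)
      rwa [map_zero] at this
    set ε₀ : K := T.inf' hT fun w => ν w / ι (s w) with hε₀_def
    obtain ⟨w₀, hw₀T, hw₀⟩ := T.exists_mem_eq_inf' hT fun w => ν w / ι (s w)
    -- ε₀ is close to 1 from below, and ≤ ratios
    have hε₀le : ∀ w ∈ T, ε₀ * ι (s w) ≤ ν w := by
      intro w hw
      have h := Finset.inf'_le (fun w => ν w / ι (s w)) hw
      rw [← hε₀_def] at h
      calc ε₀ * ι (s w) ≤ (ν w / ι (s w)) * ι (s w) :=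
            mul_le_mul_of_nonneg_right h (hιspos w hw).le
        _ = ν w := div_mul_cancel₀ _ (hιspos w hw).ne'
    have hε₀lt : ∀ r : ℝ, 0 < r → ι (1 - r) < ε₀ := by
      intro r hr
      have hpos := hιspos w₀ hw₀T
      have hsw₀ := hsTpos w₀ hw₀T
      have hchar := (st_char ι hι (hnn w₀) (hb1 w₀) (r * s w₀) (by positivity)).1
      rw [hε₀_def, hw₀, lt_div_iff₀ hpos, ← map_mul]
      have : (1 - r) * s w₀ = stPart ι (ν w₀) - r * s w₀ := by rw [hs_def]; ring
      rw [this]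
      exact hchar
    have hε₀pos : 0 < ε₀ := by
      have h := hε₀lt (1/2) (by norm_num)
      have : (0:K) < ι (1 - 1/2) := by
        have := st_smono ι hι (show (0:ℝ) < 1 - 1/2 by norm_num)
        rwa [map_zero] at this
      linarith
    -- remainder
    set rr : W → K := fun w => ν w - ε₀ * ι (s w) with hrr_def
    have hrr0 : ∀ w, 0 ≤ rr w := by
      intro w
      by_cases hw : w ∈ T
      · simp only [hrr_def]; linarith [hε₀le w hw]
      · have : s w = 0 := by
          by_contra hc
          exact hw (by simp [hT_def, hc])
        simp only [hrr_def, this, map_zero, mul_zero, sub_zero]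
        exact hnn w
    have hrrw₀ : rr w₀ = 0 := by
      simp only [hrr_def]
      rw [hε₀_def, hw₀, div_mul_cancel₀ _ (hιspos w₀ hw₀T).ne', sub_self]
    have hνw₀ : ν w₀ ≠ 0 := by
      intro hc
      have := hνs w₀ hc
      exact (hsTpos w₀ hw₀T).ne' this
    have hrrsum : ∑ w, rr w = 1 - ε₀ := by
      simp only [hrr_def]
      rw [Finset.sum_sub_distrib, hsum, ← Finset.mul_sum, ← map_sum, hssum, map_one, mul_one]
    set δ : K := 1 - ε₀ with hδ_def
    have hδ0 : 0 ≤ δ := by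
      exact hrrsum ▸ Finset.sum_nonneg fun w _ => hrr0 w
    have hδsmall : ∀ r : ℝ, 0 < r → δ < ι r := by
      intro r hr
      have h := hε₀lt r hr
      have : ι r = 1 - ι (1 - r) := by
        rw [show (1:K) = ι 1 by rw [map_one], ← map_sub]
        ring_nf
      rw [this, hδ_def]
      linarith
    rcases eq_or_lt_of_le hδ0 with hδz | hδpos
    · -- remainder is zero: one level
      have hε₀one : ε₀ = 1 := by rw [hδ_def] at hδz; linarith
      have hrrz : ∀ w, rr w = 0 := by
        intro w
        have := (Finset.sum_eq_zero_iff_of_nonneg fun w _ => hrr0 w).mp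
          (by rw [hrrsum, ← hδz])
        exact this w (Finset.mem_univ w)
      refine ⟨0, by omega, fun _ => s, fun _ => 1, fun _ w => hs0 w, fun _ => hssum,
        fun _ => zero_le_one, by simp, fun i => i.elim0, fun w => ?_⟩
      have : ν w = ι (s w) := by
        have := hrrz w
        simp only [hrr_def, hε₀one, one_mul] at this
        linarith
      simp [this]
    · -- recurse
      set ν' : W → K := fun w => rr w / δ with hν'_def
      have hν'nn : ∀ w, 0 ≤ ν' w := fun w => div_nonneg (hrr0 w) hδ0
      have hν'sum : ∑ w, ν' w = 1 := by
        simp only [hν'_def]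
        rw [← Finset.sum_div, hrrsum, div_self hδpos.ne']
      have hν'card : ((Finset.univ : Finset W).filter fun w => ν' w ≠ 0).card ≤ n := by
        have hsub : ((Finset.univ : Finset W).filter fun w => ν' w ≠ 0) ⊆
            (((Finset.univ : Finset W).filter fun w => ν w ≠ 0).erase w₀) := by
          intro w hw
          simp only [Finset.mem_filter, Finset.mem_univ, true_and] at hw
          have hrrne : rr w ≠ 0 := by
            intro hc
            exact hw (by simp [hν'_def, hc])
          refine Finset.mem_erase.mpr ⟨?_, ?_⟩
          · intro hc; rw [hc] at hrrne; exact hrrne hrrw₀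
          · simp only [Finset.mem_filter, Finset.mem_univ, true_and]
            intro hc
            have hsz := hνs w hc
            apply hrrne
            simp [hrr_def, hc, hsz]
          
        have hmem : w₀ ∈ (Finset.univ : Finset W).filter fun w => ν w ≠ 0 := by
          simp [hνw₀]
        calc ((Finset.univ : Finset W).filter fun w => ν' w ≠ 0).card
            ≤ (((Finset.univ : Finset W).filter fun w => ν w ≠ 0).erase w₀).card :=
              Finset.card_le_card hsub
          _ = ((Finset.univ : Finset W).filter fun w => ν w ≠ 0).card - 1 :=
              Finset.card_erase_of_mem hmem
          _ ≤ n := by omega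
      obtain ⟨k', hk', μ', ε', h1, h2, h3, h4, h5, h6⟩ := ih ν' hν'nn hν'sum hν'card
      refine ⟨k' + 1, by omega, Fin.cons s μ', Fin.cons ε₀ (fun j => δ * ε' j),
        ?_, ?_, ?_, ?_, ?_, ?_⟩
      · intro i w
        refine Fin.cases ?_ ?_ i
        · simpa using hs0 w
        · intro j; simpa using h1 j w
      · intro i
        refine Fin.cases ?_ ?_ i
        · simpa using hssum
        · intro j; simpa using h2 j
      · intro i
        refine Fin.cases ?_ ?_ i
        · simpa using hε₀pos.le
        · intro j
          simp only [Fin.cons_succ]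
          exact mul_nonneg hδ0 (h3 j)
      · rw [Fin.sum_cons, ← Finset.mul_sum, h4, mul_one, hδ_def]
        ring
      · intro i
        refine Fin.cases ?_ ?_ i
        · intro _
          rw [Fin.castSucc_zero, Fin.succ_zero_eq_one, Fin.cons_zero,
            show (1 : Fin (k' + 2)) = Fin.succ 0 from rfl, Fin.cons_succ]
          refine st_eq_zero ι hι
            (div_nonneg (mul_nonneg hδ0 (h3 0)) hε₀pos.le) fun r hr => ?_
          have hε'le : ε' 0 ≤ 1 := by
            rw [← h4]
            exact Finset.single_le_sum (fun i _ => h3 i) (Finset.mem_univ 0)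
          have hhalf : ι (1/2 : ℝ) ≤ ε₀ := by
            have := hε₀lt (1/2) (by norm_num)
            have he : ((1:ℝ) - 1/2) = 1/2 := by norm_num
            rw [he] at this
            exact this.le
          have hhalfpos : (0:K) < ι (1/2 : ℝ) := by
            have := st_smono ι hι (show (0:ℝ) < 1/2 by norm_num)
            rwa [map_zero] at this
          rw [div_le_iff₀ hε₀pos]
          calc δ * ε' 0 ≤ δ := mul_le_of_le_one_right hδ0 hε'le
            _ ≤ ι (r/2) := (hδsmall (r/2) (by linarith)).le
            _ = ι r * ι (1/2 : ℝ) := by rw [← map_mul]; ring_nf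
            _ ≤ ι r * ε₀ := by
                apply mul_le_mul_of_nonneg_left hhalf
                have := st_smono ι hι hr
                rw [map_zero] at this
                exact this.le
        · intro j hne
          simp only [← Fin.succ_castSucc, Fin.cons_succ] at hne ⊢
          rw [mul_div_mul_left _ _ hδpos.ne']
          exact h5 j (fun hc => hne (by rw [hc, mul_zero]))
      · intro w
        rw [Fin.sum_univ_succ]
        simp only [Fin.cons_zero, Fin.cons_succ]
        have h7 : ∑ j : Fin (k' + 1), δ * ε' j * ι (μ' j w) = δ * ν' w := by
          rw [show δ * ν' w = δ * ∑ j, ε' j * ι (μ' j w) by rw [← h6 w], Finset.mul_sum]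
          exact Finset.sum_congr rfl fun j _ => by ring
        rw [h7]
        have h8 : δ * ν' w = rr w := by
          simp only [hν'_def]
          field_simp
        rw [h8]
        simp only [hrr_def]
        ring

/-- Let `W` be finite and let `ν` be a probability measure on `W` with values in a
non-Archimedean ordered field extension of `ℝ`.  Then there exist `k ≤ |W|`, standard
probability measures `μ₀, …, μₖ` on `W`, and nonnegative field elements `ε₀, …, εₖ` with
`∑ εᵢ = 1` and `st(εᵢ₊₁/εᵢ) = 0` whenever `εᵢ ≠ 0`, such that `ν = ε₀μ₀ + ⋯ + εₖμₖ`. -/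
theorem stmt11 {W : Type*} [Fintype W] {K : Type*} [Field K] [LinearOrder K] [IsStrictOrderedRing K]
    (ι : ℝ →+* K) (hι : Monotone ι)
    (hna : ∃ η : K, 0 < η ∧ ∀ r : ℝ, 0 < r → η < ι r)
    (ν : W → K) (hnn : ∀ w, 0 ≤ ν w) (hsum : ∑ w, ν w = 1) :
    ∃ k, k ≤ Fintype.card W ∧
      ∃ μ : Fin (k + 1) → W → ℝ, ∃ ε : Fin (k + 1) → K,
        (∀ i w, 0 ≤ μ i w) ∧ (∀ i, ∑ w, μ i w = 1) ∧
        (∀ i, 0 ≤ ε i) ∧ (∑ i, ε i = 1) ∧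
        (∀ i : Fin k, ε i.castSucc ≠ 0 → stPart ι (ε i.succ / ε i.castSucc) = 0) ∧
        (∀ w, ν w = ∑ i, ε i * ι (μ i w)) := by
  classical
  obtain ⟨k, hk, rest⟩ := st_main_aux ι hι (Fintype.card W) ν hnn hsum
    (le_trans (Finset.card_filter_le _ _) (by rw [Finset.card_univ]))
  exact ⟨k, by omega, rest⟩
end

section
/- Let W be finite with |W| = n. Every lexicographic probability system (finite or transfinite sequence of probability measures on W) is expectation-equivalent to an LPS of length at most n: there is a subsequence of at most n measures that induces the same lexicographic comparison of expected values on all real-valued random variables. -/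
/-- Lexicographic comparison of real tuples indexed by a linear order. -/
def lexLe {I : Type*} [LinearOrder I] (x y : I → ℝ) : Prop :=
  x = y ∨ ∃ i, (∀ j, j < i → x j = y j) ∧ x i < y i

/-- The evaluation-against-`d` linear functional `v ↦ ∑ w, v w * d w`. -/
noncomputable def evalLin {W : Type*} [Fintype W] (d : W → ℝ) : (W → ℝ) →ₗ[ℝ] ℝ where
  toFun v := ∑ w, v w * d w
  map_add' u v := by simp [add_mul, Finset.sum_add_distrib]
  map_smul' c v := by simp [Finset.mul_sum, mul_assoc]

lemma evalLin_apply {W : Type*} [Fintype W] (X Y : W → ℝ) (v : W → ℝ) :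
    evalLin (fun w => Y w - X w) v = (∑ w, v w * Y w) - ∑ w, v w * X w := by
  simp [evalLin, mul_sub, Finset.sum_sub_distrib]

lemma lexLe_iff {I : Type*} [LinearOrder I] (x y : I → ℝ) (g : I → ℝ)
    (hg : ∀ i, g i = y i - x i) :
    lexLe x y ↔ (∀ i, g i = 0) ∨ ∃ i, (∀ j, j < i → g j = 0) ∧ 0 < g i := by
  have h1 : ∀ i, g i = 0 ↔ x i = y i := by
    intro i; rw [hg i, sub_eq_zero, eq_comm]
  have h2 : ∀ i, 0 < g i ↔ x i < y i := by
    intro i; rw [hg i, sub_pos]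
  constructor
  · rintro (h | ⟨i, hj, hi⟩)
    · exact Or.inl fun i => (h1 i).2 (congrFun h i)
    · exact Or.inr ⟨i, fun j hji => (h1 j).2 (hj j hji), (h2 i).2 hi⟩
  · rintro (h | ⟨i, hj, hi⟩)
    · exact Or.inl (funext fun i => (h1 i).1 (h i))
    · exact Or.inr ⟨i, fun j hji => (h1 j).1 (hj j hji), (h2 i).1 hi⟩

/-- Vanishing on a lower set: if a linear functional kills `μ j` for every selected
`j` in a lower set `T`, it kills `μ i` for every `i ∈ T`. -/
lemma vanish_on {W : Type*} [Fintype W] {I : Type*} [LinearOrder I] [WellFoundedLT I]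
    (μ : I → W → ℝ) (S : Set I)
    (hS : ∀ i, i ∉ S → μ i ∈ Submodule.span ℝ (μ '' {j | j < i}))
    (L : (W → ℝ) →ₗ[ℝ] ℝ) (T : Set I) (hT : ∀ a b, a < b → b ∈ T → a ∈ T)
    (hz : ∀ j, j ∈ S → j ∈ T → L (μ j) = 0) : ∀ i ∈ T, L (μ i) = 0 := by
  intro i
  induction i using WellFoundedLT.induction with
  | _ i IH =>
    intro hiT
    by_cases hi : i ∈ S
    · exact hz i hi hiT
    · have hspan : Submodule.span ℝ (μ '' {j | j < i}) ≤ LinearMap.ker L := by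
        rw [Submodule.span_le]
        rintro _ ⟨j, hj, rfl⟩
        exact LinearMap.mem_ker.2 (IH j hj (hT j i hj hiT))
      exact LinearMap.mem_ker.1 (hspan (hS i hi))

/-- Key transfer lemma: the lexicographic sign data of `i ↦ L (μ i)` agrees with that of
its restriction to the selected subsequence. -/
lemma transfer {W : Type*} [Fintype W] {I : Type*} [LinearOrder I] [WellFoundedLT I]
    (μ : I → W → ℝ) (S : Set I)
    (hS : ∀ i, i ∉ S → μ i ∈ Submodule.span ℝ (μ '' {j | j < i}))
    {m : ℕ} (e : Fin m → I) (he : StrictMono e) (hrange : Set.range e = S)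
    (L : (W → ℝ) →ₗ[ℝ] ℝ) :
    ((∀ i, L (μ i) = 0) ∨ ∃ i, (∀ j, j < i → L (μ j) = 0) ∧ 0 < L (μ i)) ↔
    ((∀ k, L (μ (e k)) = 0) ∨ ∃ k, (∀ k', k' < k → L (μ (e k')) = 0) ∧ 0 < L (μ (e k))) := by
  constructor
  · rintro (h | ⟨i, hbelow, hpos⟩)
    · exact Or.inl fun k => h (e k)
    · -- the witness is selected
      have hiS : i ∈ S := by
        by_contra hi
        have hspan : Submodule.span ℝ (μ '' {j | j < i}) ≤ LinearMap.ker L := by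
          rw [Submodule.span_le]
          rintro _ ⟨j, hj, rfl⟩
          exact LinearMap.mem_ker.2 (hbelow j hj)
        exact absurd (LinearMap.mem_ker.1 (hspan (hS i hi))) (ne_of_gt hpos)
      obtain ⟨k, rfl⟩ : ∃ k, e k = i := by
        rw [← hrange] at hiS; exact hiS
      exact Or.inr ⟨k, fun k' hk' => hbelow (e k') (he hk'), hpos⟩
  · rintro (h | ⟨k, hbelow, hpos⟩)
    · refine Or.inl (fun i => vanish_on μ S hS L Set.univ (fun _ _ _ _ => trivial) ?_ i trivial)
      intro j hjS _
      obtain ⟨k, rfl⟩ : ∃ k, e k = j := by rw [← hrange] at hjS; exact hjS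
      exact h k
    · refine Or.inr ⟨e k, ?_, hpos⟩
      intro j hj
      refine vanish_on μ S hS L (Set.Iio (e k)) (fun a b hab hb => lt_trans hab hb) ?_ j hj
      intro j' hj'S hj'lt
      obtain ⟨k', rfl⟩ : ∃ k', e k' = j' := by rw [← hrange] at hj'S; exact hj'S
      exact hbelow k' (he.lt_iff_lt.1 hj'lt)

/-- The selected family is linearly independent. -/
lemma indep_sel {W : Type*} [Fintype W] {I : Type*} [LinearOrder I]
    (μ : I → W → ℝ)
    (S : Set I) (hSdef : S = {i | μ i ∉ Submodule.span ℝ (μ '' {j | j < i})}) :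
    LinearIndependent ℝ (fun j : S => μ (j : I)) := by
  classical
  rw [linearIndependent_iff']
  intro t g hsum k hk
  by_contra hgk
  -- consider the support of g within t
  set t' : Finset S := t.filter (fun j => g j ≠ 0) with ht'
  have ht'ne : t'.Nonempty := ⟨k, Finset.mem_filter.2 ⟨hk, hgk⟩⟩
  set i := t'.max' ht'ne with hi
  have hit' : i ∈ t' := t'.max'_mem ht'ne
  have hgi : g i ≠ 0 := (Finset.mem_filter.1 hit').2
  have hit : i ∈ t := (Finset.mem_filter.1 hit').1
  -- every term of the remaining sum lies in the span of strictly earlier vectors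
  have hmem : ∀ j ∈ t.erase i, g j • μ (j : I) ∈ Submodule.span ℝ (μ '' {j' | j' < (i : I)}) := by
    intro j hj
    by_cases hgj : g j = 0
    · simp [hgj]
    · have hjt' : j ∈ t' := Finset.mem_filter.2 ⟨Finset.mem_of_mem_erase hj, hgj⟩
      have hlt : (j : I) < (i : I) := by
        have hle := t'.le_max' j hjt'
        have hne : j ≠ i := Finset.ne_of_mem_erase hj
        exact Subtype.coe_lt_coe.2 (lt_of_le_of_ne hle hne)
      exact Submodule.smul_mem _ _ (Submodule.subset_span ⟨(j : I), hlt, rfl⟩)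
  have hsum_mem : (∑ j ∈ t.erase i, g j • μ (j : I)) ∈
      Submodule.span ℝ (μ '' {j' | j' < (i : I)}) :=
    Submodule.sum_mem _ hmem
  have hspanmem : μ (i : I) ∈ Submodule.span ℝ (μ '' {j' | j' < (i : I)}) := by
    have h2 : g i • μ (i : I) = - ∑ j ∈ t.erase i, g j • μ (j : I) := by
      have h3 := Finset.sum_erase_add t (fun j => g j • μ (j : I)) hit
      rw [← h3] at hsum
      exact eq_neg_of_add_eq_zero_right hsum
    have h1 : μ (i : I) = (g i)⁻¹ • (g i • μ (i : I)) := by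
      rw [smul_smul, inv_mul_cancel₀ hgi, one_smul]
    rw [h1, h2]
    exact Submodule.smul_mem _ _ (Submodule.neg_mem _ hsum_mem)
  have hiS : (i : I) ∈ {i | μ i ∉ Submodule.span ℝ (μ '' {j | j < i})} := hSdef ▸ i.2
  exact hiS hspanmem

/-- Let `W` be finite with `|W| = n`.  Every lexicographic probability system (a possibly
transfinite well-ordered sequence of probability measures on `W`) is expectation-equivalent
to an LPS of length at most `n`: there is a subsequence of at most `n` of the measures
inducing the same lexicographic comparison of expected values on all real-valued random
variables. -/
theorem stmt12 {W : Type*} [Fintype W] {I : Type*} [LinearOrder I] [WellFoundedLT I]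
    (μ : I → W → ℝ) (hnn : ∀ i w, 0 ≤ μ i w) (hsum : ∀ i, ∑ w, μ i w = 1) :
    ∃ m, m ≤ Fintype.card W ∧ ∃ e : Fin m → I, StrictMono e ∧
      ∀ X Y : W → ℝ,
        (lexLe (fun i => ∑ w, μ i w * X w) (fun i => ∑ w, μ i w * Y w) ↔
         lexLe (fun j : Fin m => ∑ w, μ (e j) w * X w)
               (fun j : Fin m => ∑ w, μ (e j) w * Y w)) := by
  classical
  set S : Set I := {i | μ i ∉ Submodule.span ℝ (μ '' {j | j < i})} with hSdef
  have hS : ∀ i, i ∉ S → μ i ∈ Submodule.span ℝ (μ '' {j | j < i}) := by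
    intro i hi
    simpa [hSdef] using hi
  have hind : LinearIndependent ℝ (fun j : S => μ (j : I)) := indep_sel μ S hSdef
  have hfin : S.Finite := Set.finite_coe_iff.1 hind.finite
  set s : Finset I := hfin.toFinset with hsdef
  have hsS : (↑s : Set I) = S := hfin.coe_toFinset
  refine ⟨s.card, ?_, ?_⟩
  · -- cardinality bound
    haveI : Fintype S := hfin.fintype
    have h1 : Fintype.card S ≤ Module.finrank ℝ (W → ℝ) := hind.fintype_card_le_finrank
    have h2 : s.card = Fintype.card S := by
      rw [hsdef, Set.Finite.card_toFinset]
    rw [h2]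
    simpa [Module.finrank_pi] using h1
  · set e : Fin s.card → I := fun k => (s.orderIsoOfFin rfl k : I) with hedef
    have he : StrictMono e := by
      intro a b hab
      exact (s.orderIsoOfFin rfl).strictMono hab
    have hrange : Set.range e = S := by
      rw [← hsS]
      ext i
      constructor
      · rintro ⟨k, rfl⟩
        exact (s.orderIsoOfFin rfl k).2
      · intro hi
        obtain ⟨k, hk⟩ := (s.orderIsoOfFin rfl).surjective ⟨i, hi⟩
        exact ⟨k, by rw [hedef]; exact congrArg Subtype.val hk⟩
    refine ⟨e, he, ?_⟩
    intro X Y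
    set L : (W → ℝ) →ₗ[ℝ] ℝ := evalLin (fun w => Y w - X w) with hL
    have key := transfer μ S hS e he hrange L
    rw [lexLe_iff _ _ (fun i => L (μ i)) (fun i => evalLin_apply X Y (μ i)),
        lexLe_iff _ _ (fun k => L (μ (e k))) (fun k => evalLin_apply X Y (μ (e k)))]
    exact key
end

section
/- If two structured lexicographic probability systems over the same measurable space are expectation-equivalent, then they are equal: for SLPS's μ⃗ and μ⃗' over (W, F), μ⃗ ≈ μ⃗' implies μ⃗ = μ⃗'. -/
/-- A lexicographic probability system over `(W, F)`: `F` is an algebra of subsets of `W`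
and each `μ i` is a finitely additive probability measure on `F`. -/
structure IsLPS {W I : Type*} (F : Set (Set W)) (μ : I → Set W → ℝ) : Prop where
  univ_mem : Set.univ ∈ F
  compl_mem : ∀ ⦃U⦄, U ∈ F → Uᶜ ∈ F
  union_mem : ∀ ⦃U V⦄, U ∈ F → V ∈ F → U ∪ V ∈ F
  nonneg : ∀ i, ∀ V ∈ F, 0 ≤ μ i V
  total : ∀ i, μ i Set.univ = 1
  additive : ∀ i, ∀ V₁ ∈ F, ∀ V₂ ∈ F, Disjoint V₁ V₂ → μ i (V₁ ∪ V₂) = μ i V₁ + μ i V₂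

/-- A structured LPS: additionally there are sets `U i ∈ F` with `μ i (U i) = 1` and
`μ i (U j) = 0` for all `j > i`. -/
def IsSLPS {W I : Type*} [LinearOrder I] (F : Set (Set W)) (μ : I → Set W → ℝ) : Prop :=
  IsLPS F μ ∧ ∃ U : I → Set W, ∀ i, U i ∈ F ∧ μ i (U i) = 1 ∧ ∀ j, i < j → μ i (U j) = 0

/-- Expectation-equivalence of two LPS's: for all measurable random variables `X, Y`
(with their finite range listed among the values of a finset `s`), the lexicographic
comparisons of the sequences of expectations agree. -/
def LPSEquiv {W I : Type*} [LinearOrder I] (F : Set (Set W)) (μ μ' : I → Set W → ℝ) : Prop :=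
  ∀ X Y : W → ℝ, (∀ x, X ⁻¹' {x} ∈ F) → (∀ x, Y ⁻¹' {x} ∈ F) →
    ∀ s : Finset ℝ, Set.range X ⊆ ↑s → Set.range Y ⊆ ↑s →
      (lexLe (fun i => ∑ x ∈ s, x * μ i (X ⁻¹' {x}))
             (fun i => ∑ x ∈ s, x * μ i (Y ⁻¹' {x})) ↔
       lexLe (fun i => ∑ x ∈ s, x * μ' i (X ⁻¹' {x}))
             (fun i => ∑ x ∈ s, x * μ' i (Y ⁻¹' {x})))

namespace Stmt13Aux

variable {W I : Type*} [LinearOrder I] {F : Set (Set W)} {μ μ' : I → Set W → ℝ}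

lemma empty_mem (hL : IsLPS F μ) : (∅ : Set W) ∈ F := by
  have := hL.compl_mem hL.univ_mem
  simpa using this

lemma inter_mem (hL : IsLPS F μ) {A B : Set W} (hA : A ∈ F) (hB : B ∈ F) : A ∩ B ∈ F := by
  have := hL.compl_mem (hL.union_mem (hL.compl_mem hA) (hL.compl_mem hB))
  simpa [Set.compl_union] using this

lemma meas_empty (hL : IsLPS F μ) (i : I) : μ i (∅ : Set W) = 0 := by
  have h := hL.additive i ∅ (empty_mem hL) ∅ (empty_mem hL) (by simp)
  simp at h
  linarith

lemma mono (hL : IsLPS F μ) (i : I) {A B : Set W} (hA : A ∈ F) (hB : B ∈ F)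
    (hAB : A ⊆ B) : μ i A ≤ μ i B := by
  have hBA : B ∩ Aᶜ ∈ F := inter_mem hL hB (hL.compl_mem hA)
  have hd : Disjoint A (B ∩ Aᶜ) := by
    rw [Set.disjoint_left]
    intro w hw hw'
    exact hw'.2 hw
  have hu : A ∪ B ∩ Aᶜ = B := by
    ext w
    constructor
    · rintro (hw | hw)
      · exact hAB hw
      · exact hw.1
    · intro hw
      by_cases hwa : w ∈ A
      · exact Or.inl hwa
      · exact Or.inr ⟨hw, hwa⟩
  have h2 := hL.additive i A hA _ hBA hd
  rw [hu] at h2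
  have := hL.nonneg i _ hBA
  linarith

lemma subadd (hL : IsLPS F μ) (i : I) {A B : Set W} (hA : A ∈ F) (hB : B ∈ F) :
    μ i (A ∪ B) ≤ μ i A + μ i B := by
  have hmem : B ∩ Aᶜ ∈ F := inter_mem hL hB (hL.compl_mem hA)
  have hd : Disjoint A (B ∩ Aᶜ) := by
    rw [Set.disjoint_left]
    intro w hw hw'
    exact hw'.2 hw
  have hu : A ∪ B ∩ Aᶜ = A ∪ B := by
    ext w
    constructor
    · rintro (hw | hw)
      · exact Or.inl hw
      · exact Or.inr hw.1
    · rintro (hw | hw)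
      · exact Or.inl hw
      · by_cases hwa : w ∈ A
        · exact Or.inl hwa
        · exact Or.inr ⟨hw, hwa⟩
  have h2 := hL.additive i A hA _ hmem hd
  rw [hu] at h2
  have := mono hL i hmem hB Set.inter_subset_left
  linarith

lemma meas_compl (hL : IsLPS F μ) (i : I) {A : Set W} (hA : A ∈ F) :
    μ i Aᶜ = 1 - μ i A := by
  have h2 := hL.additive i A hA Aᶜ (hL.compl_mem hA) disjoint_compl_right
  rw [Set.union_compl_self, hL.total i] at h2
  linarith

lemma meas_le_one (hL : IsLPS F μ) (i : I) {A : Set W} (hA : A ∈ F) : μ i A ≤ 1 := by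
  have := mono hL i hA hL.univ_mem (Set.subset_univ A)
  rwa [hL.total i] at this

/-- scaled indicator -/
noncomputable def ind (A : Set W) (c : ℝ) : W → ℝ := A.indicator fun _ => c

lemma ind_pre_self {A : Set W} {c : ℝ} (hc : c ≠ 0) : ind A c ⁻¹' {c} = A := by
  ext w
  by_cases hw : w ∈ A <;> simp [ind, Set.indicator_apply, hw, hc, Ne.symm hc]

lemma ind_pre_zero {A : Set W} {c : ℝ} (hc : c ≠ 0) : ind A c ⁻¹' {0} = Aᶜ := by
  ext w
  by_cases hw : w ∈ A <;> simp [ind, Set.indicator_apply, hw, hc]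

lemma ind_pre_other {A : Set W} {c x : ℝ} (hx : x ≠ c) (hx0 : x ≠ 0) :
    ind A c ⁻¹' {x} = ∅ := by
  ext w
  by_cases hw : w ∈ A <;> simp [ind, Set.indicator_apply, hw, Ne.symm hx, Ne.symm hx0]

lemma ind_pre_mem (hL : IsLPS F μ) {A : Set W} (hA : A ∈ F) {c : ℝ} (hc : c ≠ 0)
    (x : ℝ) : ind A c ⁻¹' {x} ∈ F := by
  by_cases hx : x = c
  · rw [hx, ind_pre_self hc]; exact hA
  · by_cases hx0 : x = 0
    · rw [hx0, ind_pre_zero hc]; exact hL.compl_mem hA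
    · rw [ind_pre_other hx hx0]; exact empty_mem hL

lemma ind_range {A : Set W} {c : ℝ} {s : Finset ℝ} (h0 : (0:ℝ) ∈ s) (hc : c ∈ s) :
    Set.range (ind A c) ⊆ ↑s := by
  rintro x ⟨w, rfl⟩
  by_cases hw : w ∈ A <;> simp [ind, Set.indicator_apply, hw, h0, hc]

lemma sum_ind_one (ν : Set W → ℝ) (hν : ν ∅ = 0) {A : Set W} {c : ℝ}
    (hc0 : 0 < c) (hc1 : c < 1) :
    ∑ x ∈ ({0, c, 1} : Finset ℝ), x * ν (ind A 1 ⁻¹' {x}) = ν A := by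
  rw [show ({0, c, 1} : Finset ℝ) = insert 0 (insert c {1}) from rfl,
    Finset.sum_insert (by simp [hc0.ne, hc0.ne']),
    Finset.sum_insert (by simp [hc1.ne]), Finset.sum_singleton]
  rw [ind_pre_self (one_ne_zero), ind_pre_other hc1.ne hc0.ne', hν]
  ring

lemma sum_ind_c (ν : Set W → ℝ) (hν : ν ∅ = 0) {A : Set W} {c : ℝ}
    (hc0 : 0 < c) (hc1 : c < 1) :
    ∑ x ∈ ({0, c, 1} : Finset ℝ), x * ν (ind A c ⁻¹' {x}) = c * ν A := by
  rw [show ({0, c, 1} : Finset ℝ) = insert 0 (insert c {1}) from rfl,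
    Finset.sum_insert (by simp [hc0.ne, hc0.ne']),
    Finset.sum_insert (by simp [hc1.ne]), Finset.sum_singleton]
  rw [ind_pre_self hc0.ne', ind_pre_other (Ne.symm hc1.ne) one_ne_zero, hν]
  ring

lemma lexLe_of (x y : I → ℝ) (i : I) (he : ∀ j, j < i → x j = y j) (hlt : x i < y i) :
    lexLe x y := Or.inr ⟨i, he, hlt⟩

lemma le_of_lexLe (x y : I → ℝ) (i : I) (he : ∀ j, j < i → x j = y j)
    (h : lexLe x y) : x i ≤ y i := by
  rcases h with rfl | ⟨k, hk, hlt⟩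
  · exact le_refl _
  · rcases lt_trichotomy k i with h1 | rfl | h1
    · exact absurd (he k h1) (ne_of_lt hlt)
    · exact le_of_lt hlt
    · exact le_of_eq (hk i h1)

/-- The key extraction lemma: comparing `1_A` with `c · 1_S`. -/
lemma expect_le (hL : IsLPS F μ) (hL' : IsLPS F μ') (h : LPSEquiv F μ μ')
    {i : I} {A S : Set W} (hA : A ∈ F) (hS : S ∈ F) {c : ℝ} (hc0 : 0 < c) (hc1 : c < 1)
    (hz : ∀ j, j < i → μ j A = 0 ∧ μ j S = 0 ∧ μ' j A = 0 ∧ μ' j S = 0)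
    (hlt : μ i A < c * μ i S) : μ' i A ≤ c * μ' i S := by
  have key := h (ind A 1) (ind S c)
    (ind_pre_mem hL hA one_ne_zero)
    (ind_pre_mem hL hS hc0.ne')
    ({0, c, 1} : Finset ℝ)
    (ind_range (by simp) (by simp))
    (ind_range (by simp) (by simp))
  have e1 : (fun j => ∑ x ∈ ({0, c, 1} : Finset ℝ), x * μ j (ind A 1 ⁻¹' {x}))
      = fun j => μ j A := funext fun j => sum_ind_one (μ j) (meas_empty hL j) hc0 hc1
  have e2 : (fun j => ∑ x ∈ ({0, c, 1} : Finset ℝ), x * μ j (ind S c ⁻¹' {x}))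
      = fun j => c * μ j S := funext fun j => sum_ind_c (μ j) (meas_empty hL j) hc0 hc1
  have e1' : (fun j => ∑ x ∈ ({0, c, 1} : Finset ℝ), x * μ' j (ind A 1 ⁻¹' {x}))
      = fun j => μ' j A := funext fun j => sum_ind_one (μ' j) (meas_empty hL' j) hc0 hc1
  have e2' : (fun j => ∑ x ∈ ({0, c, 1} : Finset ℝ), x * μ' j (ind S c ⁻¹' {x}))
      = fun j => c * μ' j S := funext fun j => sum_ind_c (μ' j) (meas_empty hL' j) hc0 hc1
  rw [e1, e2, e1', e2'] at key
  have hμside : lexLe (fun j => μ j A) (fun j => c * μ j S) :=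
    lexLe_of _ _ i (fun j hj => by rw [(hz j hj).1, (hz j hj).2.1]; ring) hlt
  exact le_of_lexLe _ _ i
    (fun j hj => by rw [(hz j hj).2.2.1, (hz j hj).2.2.2]; ring)
    (key.mp hμside)

/-- Equivalence is symmetric. -/
lemma equiv_symm (h : LPSEquiv F μ μ') : LPSEquiv F μ' μ :=
  fun X Y hX hY s hsX hsY => (h X Y hX hY s hsX hsY).symm

end Stmt13Aux

open Stmt13Aux in
/-- If two structured lexicographic probability systems over the same measurable space are
expectation-equivalent, then they are equal on `F`. -/
theorem stmt13 {W I : Type*} [LinearOrder I] [WellFoundedLT I]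
    {F : Set (Set W)} {μ μ' : I → Set W → ℝ}
    (hμ : IsSLPS F μ) (hμ' : IsSLPS F μ') (h : LPSEquiv F μ μ') :
    ∀ i, ∀ V ∈ F, μ i V = μ' i V := by
  obtain ⟨hL, U, hU⟩ := hμ
  obtain ⟨hL', U', hU'⟩ := hμ'
  intro i
  apply WellFoundedLT.induction i
  clear i
  intro i IH
  -- Step 1: the level-`i` support of each system carries full mass under the other,
  -- stated symmetrically in the two systems.
  have step1 : ∀ (ν ν' : I → Set W → ℝ) (T T' : I → Set W), IsLPS F ν → IsLPS F ν' →
      LPSEquiv F ν ν' →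
      (∀ k, T k ∈ F ∧ ν k (T k) = 1 ∧ ∀ j, k < j → ν k (T j) = 0) →
      (∀ k, T' k ∈ F ∧ ν' k (T' k) = 1 ∧ ∀ j, k < j → ν' k (T' j) = 0) →
      (∀ j, j < i → ∀ V ∈ F, ν j V = ν' j V) →
      ν' i (T i) = 1 := by
    intro ν ν' T T' hK hK' heq hT hT' hIH
    by_contra hne
    have hT1 : ν' i (T i) ≤ 1 := meas_le_one hK' i (hT i).1
    have hT0 : 0 ≤ ν' i (T i) := hK'.nonneg i _ (hT i).1
    have hδ : 0 < 1 - ν' i (T i) := by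
      rcases lt_or_eq_of_le hT1 with h1 | h1
      · linarith
      · exact absurd h1 hne
    set B : Set W := (T i)ᶜ ∩ T' i with hBdef
    have hBF : B ∈ F := inter_mem hK (hK.compl_mem (hT i).1) (hT' i).1
    have hcomplF : ((T i)ᶜ : Set W) ∈ F := hK.compl_mem (hT i).1
    have hcompl'F : ((T' i)ᶜ : Set W) ∈ F := hK'.compl_mem (hT' i).1
    have hsub : (T i)ᶜ ⊆ B ∪ (T' i)ᶜ := by
      intro w hw
      by_cases hw' : w ∈ T' i
      · exact Or.inl ⟨hw, hw'⟩
      · exact Or.inr hw'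
    have hle1 : ν' i ((T i)ᶜ) ≤ ν' i (B ∪ (T' i)ᶜ) :=
      mono hK' i hcomplF (hK.union_mem hBF hcompl'F) hsub
    have hsubadd : ν' i (B ∪ (T' i)ᶜ) ≤ ν' i B + ν' i ((T' i)ᶜ) :=
      subadd hK' i hBF hcompl'F
    have hT'c : ν' i ((T' i)ᶜ) = 0 := by
      rw [meas_compl hK' i (hT' i).1, (hT' i).2.1]; ring
    have hTc : ν' i ((T i)ᶜ) = 1 - ν' i (T i) := meas_compl hK' i (hT i).1
    have hb : 0 < ν' i B := by
      rw [hT'c] at hsubadd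
      rw [hTc] at hle1
      linarith
    have hble : ν' i B ≤ 1 := meas_le_one hK' i hBF
    -- zero mass below level i
    have hz : ∀ j, j < i → ν j B = 0 ∧ ν j (T i) = 0 ∧ ν' j B = 0 ∧ ν' j (T i) = 0 := by
      intro j hj
      have hB' : ν' j B = 0 := by
        have hle := mono hK' j hBF (hT' i).1 Set.inter_subset_right
        have h0 := hK'.nonneg j _ hBF
        have := (hT' j).2.2 i hj
        linarith
      have hB : ν j B = 0 := by rw [hIH j hj B hBF]; exact hB'
      have hTj : ν j (T i) = 0 := (hT j).2.2 i hj
      have hTj' : ν' j (T i) = 0 := by rw [← hIH j hj (T i) (hT i).1]; exact hTj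
      exact ⟨hB, hTj, hB', hTj'⟩
    -- ν i B = 0
    have hνB : ν i B = 0 := by
      have hle := mono hK i hBF hcomplF Set.inter_subset_left
      have h0 := hK.nonneg i _ hBF
      have hc := meas_compl hK i (hT i).1
      rw [(hT i).2.1] at hc
      linarith
    set c : ℝ := ν' i B / 2 with hcdef
    have hc0 : 0 < c := by positivity
    have hc1 : c < 1 := by rw [hcdef]; linarith
    have hlt : ν i B < c * ν i (T i) := by
      rw [hνB, (hT i).2.1]
      linarith
    have hres := expect_le hK hK' heq hBF (hT i).1 hc0 hc1 hz hlt
    nlinarith [hres, hδ, hb, hcdef]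
  have IH' : ∀ j, j < i → ∀ V ∈ F, μ' j V = μ j V := by
    intro j hj V hV
    exact (IH j hj V hV).symm
  have h1 : μ' i (U i) = 1 := step1 μ μ' U U' hL hL' h hU hU' IH
  have h2 : μ i (U' i) = 1 := step1 μ' μ U' U hL' hL (equiv_symm h) hU' hU IH'
  -- The common support T
  set T : Set W := U i ∩ U' i with hTdef
  have hTF : T ∈ F := inter_mem hL (hU i).1 (hU' i).1
  have hTc_eq : Tᶜ = (U i)ᶜ ∪ (U' i)ᶜ := by rw [hTdef, Set.compl_inter]
  have hμTc : μ i Tᶜ = 0 := by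
    rw [hTc_eq]
    have hs := subadd hL i (hL.compl_mem (hU i).1) (hL.compl_mem (hU' i).1)
    have c1 : μ i ((U i)ᶜ) = 0 := by
      rw [meas_compl hL i (hU i).1, (hU i).2.1]; ring
    have c2 : μ i ((U' i)ᶜ) = 0 := by
      rw [meas_compl hL i (hU' i).1, h2]; ring
    have h0 := hL.nonneg i _ (hL.union_mem (hL.compl_mem (hU i).1) (hL.compl_mem (hU' i).1))
    linarith
  have hμ'Tc : μ' i Tᶜ = 0 := by
    rw [hTc_eq]
    have hs := subadd hL' i (hL'.compl_mem (hU i).1) (hL'.compl_mem (hU' i).1)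
    have c1 : μ' i ((U i)ᶜ) = 0 := by
      rw [meas_compl hL' i (hU i).1, h1]; ring
    have c2 : μ' i ((U' i)ᶜ) = 0 := by
      rw [meas_compl hL' i (hU' i).1, (hU' i).2.1]; ring
    have h0 := hL'.nonneg i _ (hL'.union_mem (hL'.compl_mem (hU i).1) (hL'.compl_mem (hU' i).1))
    linarith
  have hμT : μ i T = 1 := by
    have := meas_compl hL i hTF
    linarith
  have hμ'T : μ' i T = 1 := by
    have := meas_compl hL' i hTF
    linarith
  intro V hV
  set A : Set W := V ∩ T with hAdef
  have hAF : A ∈ F := inter_mem hL hV hTF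
  have hVsplit : A ∪ V ∩ Tᶜ = V := by
    ext w
    constructor
    · rintro (hw | hw)
      · exact hw.1
      · exact hw.1
    · intro hw
      by_cases hwt : w ∈ T
      · exact Or.inl ⟨hw, hwt⟩
      · exact Or.inr ⟨hw, hwt⟩
  have hVTcF : V ∩ Tᶜ ∈ F := inter_mem hL hV (hL.compl_mem hTF)
  have hdisj : Disjoint A (V ∩ Tᶜ) := by
    rw [Set.disjoint_left]
    intro w hw hw'
    exact hw'.2 hw.2
  have hμVA : μ i V = μ i A := by
    have hadd := hL.additive i A hAF _ hVTcF hdisj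
    rw [hVsplit] at hadd
    have hle := mono hL i hVTcF (hL.compl_mem hTF) Set.inter_subset_right
    have h0 := hL.nonneg i _ hVTcF
    linarith
  have hμ'VA : μ' i V = μ' i A := by
    have hadd := hL'.additive i A hAF _ hVTcF hdisj
    rw [hVsplit] at hadd
    have hle := mono hL' i hVTcF (hL'.compl_mem hTF) Set.inter_subset_right
    have h0 := hL'.nonneg i _ hVTcF
    linarith
  -- Zero mass of A and T below level i
  have hz : ∀ j, j < i → μ j A = 0 ∧ μ j T = 0 ∧ μ' j A = 0 ∧ μ' j T = 0 := by
    intro j hj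
    have hTU : T ⊆ U i := Set.inter_subset_left
    have hTU' : T ⊆ U' i := Set.inter_subset_right
    have hμT0 : μ j T = 0 := by
      have hle2 := mono hL j hTF (hU i).1 hTU
      have h0 := hL.nonneg j _ hTF
      have := (hU j).2.2 i hj
      linarith
    have hμ'T0 : μ' j T = 0 := by
      have hle2 := mono hL' j hTF (hU' i).1 hTU'
      have h0 := hL'.nonneg j _ hTF
      have := (hU' j).2.2 i hj
      linarith
    have hAT : A ⊆ T := Set.inter_subset_right
    have hμA0 : μ j A = 0 := by
      have hle := mono hL j hAF hTF hAT
      have h0 := hL.nonneg j _ hAF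
      linarith
    have hμ'A0 : μ' j A = 0 := by
      have hle := mono hL' j hAF hTF hAT
      have h0 := hL'.nonneg j _ hAF
      linarith
    exact ⟨hμA0, hμT0, hμ'A0, hμ'T0⟩
  have hz' : ∀ j, j < i → μ' j A = 0 ∧ μ' j T = 0 ∧ μ j A = 0 ∧ μ j T = 0 := by
    intro j hj
    obtain ⟨a, b, c, d⟩ := hz j hj
    exact ⟨c, d, a, b⟩
  -- Main comparison
  have haeq : μ i A = μ' i A := by
    by_contra hne
    rcases lt_or_gt_of_ne hne with hlt | hgt
    · set c : ℝ := (μ i A + μ' i A) / 2 with hcdef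
      have hA0 : 0 ≤ μ i A := hL.nonneg i _ hAF
      have hA1 : μ' i A ≤ 1 := meas_le_one hL' i hAF
      have hc0 : 0 < c := by rw [hcdef]; linarith
      have hc1 : c < 1 := by rw [hcdef]; linarith
      have hres := expect_le hL hL' h hAF hTF hc0 hc1 hz
        (by rw [hμT]; rw [hcdef]; linarith)
      rw [hμ'T] at hres
      rw [hcdef] at hres
      linarith
    · set c : ℝ := (μ i A + μ' i A) / 2 with hcdef
      have hA0 : 0 ≤ μ' i A := hL'.nonneg i _ hAF
      have hA1 : μ i A ≤ 1 := meas_le_one hL i hAF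
      have hc0 : 0 < c := by rw [hcdef]; linarith
      have hc1 : c < 1 := by rw [hcdef]; linarith
      have hres := expect_le hL' hL (equiv_symm h) hAF hTF hc0 hc1 hz'
        (by rw [hμ'T]; rw [hcdef]; linarith)
      rw [hμT] at hres
      rw [hcdef] at hres
      linarith
  rw [hμVA, hμ'VA, haeq]
end

section
/- Suppose ν is a probability measure with values in a non-Archimedean field, μ⃗ = (μ_β : β < α) is an LPS, and ν ≈ μ⃗ (they induce the same expected-value comparisons on random variables). Then for every measurable U: ν(U) > 0 iff μ_β(U) > 0 for some β; and if ν(U) > 0, then st(ν(V | U)) = μ_j(V | U) where j is the least index with μ_j(U) > 0. -/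
/-!
Both sides can be tested on the simple random variables `q • 1_A`, whose
`ν`-expectation is `ι q * ν A` and whose `μ⃗`-expectation is `(q * μ i A)ᵢ`. Comparing `1_U`
with `0` shows that `ν U ≤ 0` exactly when every `μ i U` vanishes. Comparing `q • 1_U` with
`1_{V ∩ U}` shows, for `q ≠ r := μ j (V ∩ U) / μ j U`, that `ι q ≤ ν (V ∩ U) / ν U` iff `q < r`,
since the lexicographic comparison is decided at the first index `j` where `μ j U ≠ 0`;
hence `r` is the standard part of `ν (V | U)`.
-/

section Lex

variable {I : Type*} [LinearOrder I] {x y : I → ℝ}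

theorem not_lexLe_zero_iff (hx : ∀ i, 0 ≤ x i) : ¬ lexLe x 0 ↔ ∃ i, 0 < x i := by
  constructor
  · intro h
    by_contra! hle
    exact h (Or.inl (funext fun i => (hle i).antisymm (hx i)))
  · rintro ⟨i, hi⟩ (h0 | ⟨k, -, hk⟩)
    · exact hi.ne' (congrFun h0 i)
    · exact (hx k).not_gt hk

theorem lexLe_iff_lt_of_eq_below {j : I} (hlt : ∀ i < j, x i = y i) (hj : x j ≠ y j) :
    lexLe x y ↔ x j < y j := by
  refine ⟨?_, fun h => Or.inr ⟨j, hlt, h⟩⟩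
  rintro (rfl | ⟨i, hi, hxy⟩)
  · exact absurd rfl hj
  · rcases lt_trichotomy i j with hij | rfl | hji
    · exact absurd (hlt i hij) hxy.ne
    · exact hxy
    · exact absurd (hi j hji) hj

theorem lexLe_const_mul_iff_lt_div {a b : I → ℝ} {j : I} (ha : ∀ i < j, a i = 0)
    (hb : ∀ i < j, b i = 0) (hj : 0 < a j) {q : ℝ} (hq : q ≠ b j / a j) :
    lexLe (fun i => q * a i) b ↔ q < b j / a j := by
  rw [lexLe_iff_lt_of_eq_below (fun i hi => by rw [ha i hi, hb i hi, mul_zero]), lt_div_iff₀ hj]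
  rwa [Ne, ← eq_div_iff hj.ne']

end Lex

theorem stPart_eq_of_le_iff {K : Type*} [Field K] [LinearOrder K] [IsStrictOrderedRing K]
    {ι : ℝ →+* K} (hι : StrictMono ι) {b : K} {r : ℝ} (h : ∀ q ≠ r, ι q ≤ b ↔ q < r) :
    stPart ι b = r := by
  have hupper : Set.Ioi r ⊆ {a | b ≤ ι a} := fun q (hq : r < q) =>
    (not_le.1 fun hle => hq.not_gt ((h q hq.ne').1 hle)).le
  have hlower : {a | b ≤ ι a} ⊆ Set.Ici r := by
    intro a (ha : b ≤ ι a)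
    show r ≤ a
    by_contra! har
    obtain ⟨m, ham, hmr⟩ := exists_between har
    have hmb : ι m ≤ b := (h m hmr.ne).2 hmr
    exact (hι ham).not_ge (hmb.trans ha)
  exact (isGLB_Ioi.of_subset_of_superset isGLB_Ici hupper hlower).csInf_eq
    ⟨r + 1, hupper (lt_add_one r)⟩

section FinitelyAdditive

variable {W M : Type*} {F : Set (Set W)}

theorem apply_empty_of_additive [AddLeftCancelMonoid M] {m : Set W → M} (hF : ∅ ∈ F)
    (hadd : ∀ U ∈ F, ∀ V ∈ F, Disjoint U V → m (U ∪ V) = m U + m V) : m ∅ = 0 := by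
  have h := hadd ∅ hF ∅ hF disjoint_bot_left
  rwa [Set.union_empty, left_eq_add] at h

theorem apply_mono_of_additive [AddCommMonoid M] [PartialOrder M] [IsOrderedAddMonoid M]
    {m : Set W → M} (hcompl : ∀ U ∈ F, Uᶜ ∈ F) (hinter : ∀ U ∈ F, ∀ V ∈ F, U ∩ V ∈ F)
    (hnn : ∀ U ∈ F, 0 ≤ m U) (hadd : ∀ U ∈ F, ∀ V ∈ F, Disjoint U V → m (U ∪ V) = m U + m V)
    {A B : Set W} (hA : A ∈ F) (hB : B ∈ F) (hAB : A ⊆ B) : m A ≤ m B := by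
  have hBA : B \ A ∈ F := hinter B hB _ (hcompl A hA)
  calc m A ≤ m A + m (B \ A) := le_add_of_nonneg_right (hnn _ hBA)
    _ = m B := by rw [← hadd A hA _ hBA Set.disjoint_sdiff_right, Set.union_sdiff_cancel hAB]

end FinitelyAdditive

section Indicator

variable {W L : Type*}

theorem indicator_const_preimage_mem {F : Set (Set W)} (huniv : Set.univ ∈ F)
    (hcompl : ∀ U ∈ F, Uᶜ ∈ F) {A : Set W} (hA : A ∈ F) (q : ℝ) (s : Set ℝ) :
    A.indicator (fun _ => q) ⁻¹' s ∈ F := by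
  rcases Set.indicator_const_preimage A s q with h | h | h | h <;> rw [h]
  exacts [huniv, hA, hcompl A hA, by simpa using hcompl _ huniv]

theorem sum_mul_indicator_const_preimage [NonUnitalNonAssocSemiring L] (m : Set W → L)
    (hm : m ∅ = 0) (f : ℝ → L) (hf : f 0 = 0) (A : Set W) {q : ℝ} {s : Finset ℝ} (hq : q ∈ s) :
    ∑ x ∈ s, f x * m (A.indicator (fun _ => q) ⁻¹' {x}) = f q * m A := by
  rw [Finset.sum_eq_single_of_mem q hq]
  · rcases eq_or_ne q 0 with rfl | hq0
    · simp [hf]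
    · rw [Set.indicator_preimage_of_notMem _ _ (by simpa using hq0.symm)]
      simp
  · intro x _ hxq
    rcases eq_or_ne x 0 with rfl | hx0
    · simp [hf]
    · rw [Set.indicator_preimage_of_notMem _ _ (by simpa using hx0.symm)]
      simp [Ne.symm hxq, hm]

end Indicator

/-- The paper's `ν ≈ μ⃗`, on simple random variables. -/
def ExpectationEquiv {W I K : Type*} [LinearOrder I] [Semiring K] [LE K]
    (ι : ℝ →+* K) (F : Set (Set W)) (ν : Set W → K) (μ : I → Set W → ℝ) : Prop :=
  ∀ X Y : W → ℝ, (∀ x, X ⁻¹' {x} ∈ F) → (∀ x, Y ⁻¹' {x} ∈ F) →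
    ∀ s : Finset ℝ, Set.range X ⊆ ↑s → Set.range Y ⊆ ↑s →
      ((∑ x ∈ s, ι x * ν (X ⁻¹' {x})) ≤ (∑ x ∈ s, ι x * ν (Y ⁻¹' {x})) ↔
        lexLe (fun i => ∑ x ∈ s, x * μ i (X ⁻¹' {x}))
              (fun i => ∑ x ∈ s, x * μ i (Y ⁻¹' {x})))

theorem ExpectationEquiv.mul_le_mul_iff_lexLe {W I K : Type*} [LinearOrder I] [Semiring K]
    [LE K] {ι : ℝ →+* K} {F : Set (Set W)} {ν : Set W → K} {μ : I → Set W → ℝ}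
    (h : ExpectationEquiv ι F ν μ) (huniv : Set.univ ∈ F) (hcompl : ∀ U ∈ F, Uᶜ ∈ F)
    (hν : ν ∅ = 0) (hμ : ∀ i, μ i ∅ = 0) {A B : Set W} (hA : A ∈ F) (hB : B ∈ F) (p q : ℝ) :
    ι p * ν A ≤ ι q * ν B ↔ lexLe (fun i => p * μ i A) (fun i => q * μ i B) := by
  have hp : p ∈ ({0, p, q} : Finset ℝ) := by simp
  have hq : q ∈ ({0, p, q} : Finset ℝ) := by simp
  have hrange (C : Set W) {c : ℝ} (hc : c ∈ ({0, p, q} : Finset ℝ)) :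
      Set.range (C.indicator fun _ => c) ⊆ ↑({0, p, q} : Finset ℝ) := by
    rintro _ ⟨w, rfl⟩
    by_cases hw : w ∈ C
    · simpa [hw] using hc
    · simp [hw]
  have := h _ _ (fun x => indicator_const_preimage_mem huniv hcompl hA p {x})
    (fun x => indicator_const_preimage_mem huniv hcompl hB q {x}) {0, p, q}
    (hrange A hp) (hrange B hq)
  simpa only [sum_mul_indicator_const_preimage ν hν ι (map_zero ι) _ hp,
    sum_mul_indicator_const_preimage ν hν ι (map_zero ι) _ hq,
    sum_mul_indicator_const_preimage (μ _) (hμ _) (fun x => x) rfl _ hp,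
    sum_mul_indicator_const_preimage (μ _) (hμ _) (fun x => x) rfl _ hq] using this

theorem stmt14_general {W I : Type*} [LinearOrder I]
    {K : Type*} [Field K] [LinearOrder K] [IsStrictOrderedRing K] (ι : ℝ →+* K) (hι : Monotone ι)
    (F : Set (Set W))
    (huniv : Set.univ ∈ F) (hcompl : ∀ U ∈ F, Uᶜ ∈ F)
    (hinter : ∀ U ∈ F, ∀ V ∈ F, U ∩ V ∈ F)
    (ν : Set W → K)
    (hνadd : ∀ U ∈ F, ∀ V ∈ F, Disjoint U V → ν (U ∪ V) = ν U + ν V)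
    (μ : I → Set W → ℝ)
    (hμnn : ∀ i, ∀ U ∈ F, 0 ≤ μ i U)
    (hμadd : ∀ i, ∀ U ∈ F, ∀ V ∈ F, Disjoint U V → μ i (U ∪ V) = μ i U + μ i V)
    (hequiv : ∀ X Y : W → ℝ, (∀ x, X ⁻¹' {x} ∈ F) → (∀ x, Y ⁻¹' {x} ∈ F) →
      ∀ s : Finset ℝ, Set.range X ⊆ ↑s → Set.range Y ⊆ ↑s →
        ((∑ x ∈ s, ι x * ν (X ⁻¹' {x})) ≤ (∑ x ∈ s, ι x * ν (Y ⁻¹' {x})) ↔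
          lexLe (fun i => ∑ x ∈ s, x * μ i (X ⁻¹' {x}))
                (fun i => ∑ x ∈ s, x * μ i (Y ⁻¹' {x})))) :
    ∀ U ∈ F, (0 < ν U ↔ ∃ i, 0 < μ i U) ∧
      (0 < ν U → ∀ V ∈ F, ∀ j, 0 < μ j U → (∀ i, i < j → μ i U = 0) →
        stPart ι (ν (V ∩ U) / ν U) = μ j (V ∩ U) / μ j U) := by
  have hemp : (∅ : Set W) ∈ F := by simpa using hcompl _ huniv
  have hcmp {A B : Set W} (hA : A ∈ F) (hB : B ∈ F) :=
    ExpectationEquiv.mul_le_mul_iff_lexLe hequiv huniv hcompl (apply_empty_of_additive hemp hνadd)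
      (fun i => apply_empty_of_additive hemp (hμadd i)) hA hB
  intro U hU
  have hpos : 0 < ν U ↔ ∃ i, 0 < μ i U := by
    have h := hcmp hU hU 1 0
    simp only [map_one, map_zero, one_mul, zero_mul] at h
    rw [← not_le, h, ← not_lexLe_zero_iff (hμnn · U hU)]
    rfl
  refine ⟨hpos, fun hνU V hV j hj hleast => ?_⟩
  have hVU : V ∩ U ∈ F := hinter V hV U hU
  have hVU0 (i : I) (hi : i < j) : μ i (V ∩ U) = 0 :=
    ((apply_mono_of_additive hcompl hinter (hμnn i) (hμadd i) hVU hU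
      Set.inter_subset_right).trans_eq (hleast i hi)).antisymm (hμnn i _ hVU)
  refine stPart_eq_of_le_iff (hι.strictMono_of_injective ι.injective) fun q hq => ?_
  have h := hcmp hU hVU q 1
  simp only [map_one, one_mul] at h
  rw [le_div_iff₀ hνU, h]
  exact lexLe_const_mul_iff_lt_div hleast hVU0 hj hq

/-- Suppose `ν` is a probability measure with values in a non-Archimedean ordered field
extension of `ℝ`, `μ⃗ = (μ i : i ∈ I)` is an LPS over the same algebra `F`, and `ν ≈ μ⃗`
(they induce the same expected-value comparisons on random variables).  Then for every
`U ∈ F`: `ν(U) > 0` iff `μ i (U) > 0` for some `i`; and if `ν(U) > 0` then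
`st(ν(V | U)) = μ j (V | U)` where `j` is the least index with `μ j (U) > 0`. -/
theorem stmt14 {W I : Type*} [LinearOrder I] [WellFoundedLT I]
    {K : Type*} [Field K] [LinearOrder K] [IsStrictOrderedRing K] (ι : ℝ →+* K) (hι : Monotone ι)
    (hna : ∃ η : K, 0 < η ∧ ∀ r : ℝ, 0 < r → η < ι r)
    (F : Set (Set W))
    (huniv : Set.univ ∈ F) (hcompl : ∀ U ∈ F, Uᶜ ∈ F)
    (hunion : ∀ U ∈ F, ∀ V ∈ F, U ∪ V ∈ F) (hinter : ∀ U ∈ F, ∀ V ∈ F, U ∩ V ∈ F)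
    (ν : Set W → K)
    (hνnn : ∀ U ∈ F, 0 ≤ ν U) (hνtot : ν Set.univ = 1)
    (hνadd : ∀ U ∈ F, ∀ V ∈ F, Disjoint U V → ν (U ∪ V) = ν U + ν V)
    (μ : I → Set W → ℝ)
    (hμnn : ∀ i, ∀ U ∈ F, 0 ≤ μ i U) (hμtot : ∀ i, μ i Set.univ = 1)
    (hμadd : ∀ i, ∀ U ∈ F, ∀ V ∈ F, Disjoint U V → μ i (U ∪ V) = μ i U + μ i V)
    (hequiv : ∀ X Y : W → ℝ, (∀ x, X ⁻¹' {x} ∈ F) → (∀ x, Y ⁻¹' {x} ∈ F) →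
      ∀ s : Finset ℝ, Set.range X ⊆ ↑s → Set.range Y ⊆ ↑s →
        ((∑ x ∈ s, ι x * ν (X ⁻¹' {x})) ≤ (∑ x ∈ s, ι x * ν (Y ⁻¹' {x})) ↔
          lexLe (fun i => ∑ x ∈ s, x * μ i (X ⁻¹' {x}))
                (fun i => ∑ x ∈ s, x * μ i (Y ⁻¹' {x})))) :
    ∀ U ∈ F, (0 < ν U ↔ ∃ i, 0 < μ i U) ∧
      (0 < ν U → ∀ V ∈ F, ∀ j, 0 < μ j U → (∀ i, i < j → μ i U = 0) →
        stPart ι (ν (V ∩ U) / ν U) = μ j (V ∩ U) / μ j U) :=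
  stmt14_general ι hι F huniv hcompl hinter ν hνadd μ hμnn hμadd hequiv
end

section
/- Let W = {w₁, w₂, w₃, …} = ℕ₊ with all subsets measurable, and let ν be the nonstandard probability measure defined by ν(w_j) = a_j + b_j ε with a_j = 1/2^j, b_{2j−1} = 1/2^{j−1}, b_{2j} = −1/2^{j−1} for j ≥ 1, where ε is a fixed positive infinitesimal (and ν(U) = Σ_{w_j∈U} a_j + ε Σ_{w_j∈U} b_j). Then there is no lexicographic probability system μ⃗ over (W, 2^W) that is expectation-equivalent to ν. -/
section Lex

variable {I : Type*} [LinearOrder I] {x y : I → ℝ}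

lemma lexLe_antisymm (hxy : lexLe x y) (hyx : lexLe y x) : x = y := by
  rcases hxy with h | ⟨i, hi, hlt⟩
  · exact h
  rcases hyx with h | ⟨j, hj, hlt'⟩
  · exact h.symm
  rcases lt_trichotomy i j with hij | rfl | hji
  · exact absurd (hj i hij) hlt.ne'
  · exact absurd (hlt.trans hlt') (lt_irrefl _)
  · exact absurd (hi j hji) hlt'.ne'

lemma lexLe.eq_of_forall_le (h : lexLe x y) (hle : ∀ i, y i ≤ x i) : x = y := by
  rcases h with h | ⟨i, -, hlt⟩
  · exact h
  · exact absurd (hle i) hlt.not_ge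

end Lex

lemma sum_mul_preimage_piecewise_const {α R : Type*} [NonUnitalNonAssocSemiring R]
    (g : ℝ → R) {f : Set α → R} (hf : f ∅ = 0) (U : Set α) [DecidablePred (· ∈ U)]
    {c d : ℝ} (hcd : c ≠ d) {s : Finset ℝ} (hc : c ∈ s) (hd : d ∈ s) :
    ∑ x ∈ s, g x * f (U.piecewise (fun _ => c) (fun _ => d) ⁻¹' {x}) = g c * f U + g d * f Uᶜ := by
  have hpre : ∀ x, U.piecewise (fun _ => c) (fun _ => d) ⁻¹' {x} =
      (if c = x then U else ∅) ∪ (if d = x then Uᶜ else ∅) := by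
    intro x; ext j; by_cases hj : j ∈ U <;> split_ifs <;> simp_all
  rw [Finset.sum_eq_add_of_mem c d hc hd hcd]
  · simp [hpre, hcd, hcd.symm]
  · intro x _ ⟨hxc, hxd⟩
    simp [hpre, Ne.symm hxc, Ne.symm hxd, hf]

def IsFinAddProb {α : Type*} (m : Set α → ℝ) : Prop :=
  (∀ U, 0 ≤ m U) ∧ m Set.univ = 1 ∧ ∀ U V, Disjoint U V → m (U ∪ V) = m U + m V

namespace IsFinAddProb

variable {α : Type*} {m : Set α → ℝ}

lemma empty (hm : IsFinAddProb m) : m ∅ = 0 := by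
  simpa using hm.2.2 ∅ ∅ (Set.disjoint_empty _)

lemma add_compl (hm : IsFinAddProb m) (U : Set α) : m U + m Uᶜ = 1 := by
  rw [← hm.2.2 _ _ disjoint_compl_right, Set.union_compl_self, hm.2.1]

end IsFinAddProb

def IsExpectationEquiv {α I K : Type*} [LinearOrder I] [Semiring K] [LE K] (ι : ℝ →+* K)
    (ν : Set α → K) (μ : I → Set α → ℝ) : Prop :=
  ∀ X Y : α → ℝ, ∀ s : Finset ℝ, Set.range X ⊆ ↑s → Set.range Y ⊆ ↑s →
    ((∑ x ∈ s, ι x * ν (X ⁻¹' {x})) ≤ (∑ x ∈ s, ι x * ν (Y ⁻¹' {x})) ↔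
      lexLe (fun i => ∑ x ∈ s, x * μ i (X ⁻¹' {x})) (fun i => ∑ x ∈ s, x * μ i (Y ⁻¹' {x})))

namespace IsExpectationEquiv

variable {α I K : Type*} [LinearOrder I] [Semiring K] {ι : ℝ →+* K} {ν : Set α → K}
  {μ : I → Set α → ℝ}

lemma piecewise_iff [LE K] (h : IsExpectationEquiv ι ν μ) (hν : ν ∅ = 0)
    (hμ : ∀ i, μ i ∅ = 0) (U V : Set α) {c d c' d' : ℝ} (hcd : c ≠ d) (hcd' : c' ≠ d') :
    ι c * ν U + ι d * ν Uᶜ ≤ ι c' * ν V + ι d' * ν Vᶜ ↔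
      lexLe (fun i => c * μ i U + d * μ i Uᶜ) (fun i => c' * μ i V + d' * μ i Vᶜ) := by
  classical
  set s : Finset ℝ := {c, d, c', d'}
  have hrange : ∀ (W : Set α) {e e' : ℝ}, e ∈ s → e' ∈ s →
      Set.range (W.piecewise (fun _ => e) (fun _ => e')) ⊆ s := by
    rintro W e e' he he' _ ⟨j, rfl⟩
    by_cases hj : j ∈ W <;> simp [hj, he, he']
  have hc : c ∈ s := by simp [s]
  have hd : d ∈ s := by simp [s]
  have hc' : c' ∈ s := by simp [s]
  have hd' : d' ∈ s := by simp [s]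
  have key := h _ _ s (hrange U hc hd) (hrange V hc' hd')
  simp only [sum_mul_preimage_piecewise_const ι hν _ hcd hc hd,
    sum_mul_preimage_piecewise_const ι hν _ hcd' hc' hd',
    sum_mul_preimage_piecewise_const (fun x => x) (hμ _) _ hcd hc hd,
    sum_mul_preimage_piecewise_const (fun x => x) (hμ _) _ hcd' hc' hd'] at key
  exact key

lemma piecewise_eq [PartialOrder K] (h : IsExpectationEquiv ι ν μ) (hν : ν ∅ = 0)
    (hμ : ∀ i, μ i ∅ = 0) (U V : Set α) {c d c' d' : ℝ} (hcd : c ≠ d) (hcd' : c' ≠ d')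
    (heq : ι c * ν U + ι d * ν Uᶜ = ι c' * ν V + ι d' * ν Vᶜ) (i : I) :
    c * μ i U + d * μ i Uᶜ = c' * μ i V + d' * μ i Vᶜ :=
  congrFun (lexLe_antisymm ((h.piecewise_iff hν hμ U V hcd hcd').1 heq.le)
    ((h.piecewise_iff hν hμ V U hcd' hcd).1 heq.ge)) i

lemma le_compl_of_forall_le [LinearOrder K] (h : IsExpectationEquiv ι ν μ)
    (hν : ν ∅ = 0) (hμ : ∀ i, μ i ∅ = 0) (U : Set α) (hle : ∀ i, μ i U ≤ μ i Uᶜ) :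
    ν U ≤ ν Uᶜ := by
  by_contra! hlt
  have hlex : lexLe (fun i => μ i Uᶜ) (fun i => μ i U) := by
    simpa using (h.piecewise_iff hν hμ U U zero_ne_one one_ne_zero).1 (by simpa using hlt.le)
  have hge := (h.piecewise_iff hν hμ U U one_ne_zero zero_ne_one).2
    (Or.inl (by simpa using (hlex.eq_of_forall_le hle).symm))
  exact hlt.not_ge (by simpa using hge)

/-- At every level the variable `t² - t` on `U`, `t² + t` off `U` has expectation
`t² + t (μ Uᶜ - μ U)`; being `ν`-equivalent to an indicator, this is nonnegative. -/
lemma forall_le_compl [PartialOrder K] (h : IsExpectationEquiv ι ν μ)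
    (hν : ν ∅ = 0) (hμ : ∀ i, IsFinAddProb (μ i)) (U : Set α)
    (hsmall : ∀ δ : ℝ, 0 < δ → ∃ t ∈ Set.Ioo 0 δ, ∃ V : Set α,
      ι 1 * ν V + ι 0 * ν Vᶜ = ι (t ^ 2 - t) * ν U + ι (t ^ 2 + t) * ν Uᶜ) (i : I) :
    μ i U ≤ μ i Uᶜ := by
  refine le_of_forall_pos_lt_add fun δ hδ => ?_
  obtain ⟨t, ⟨ht₀, htδ⟩, V, hV⟩ := hsmall δ hδ
  have hμV := h.piecewise_eq hν (fun j => (hμ j).empty) V U one_ne_zero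
    (by intro h; linarith) hV i
  rw [one_mul, zero_mul, add_zero] at hμV
  have hsplit := (hμ i).add_compl U
  nlinarith [(hμ i).1 V]

end IsExpectationEquiv

lemma HasSum.tsum_compl_singleton {β : Type*} {f : β → ℝ} {S : ℝ} (h : HasSum f S) (x : β) :
    ∑' j : ({x}ᶜ : Set β), f j = S - f x := by
  rw [← h.tsum_eq, ← Summable.tsum_add_tsum_compl (s := {x}) (h.summable.subtype _)
    (h.summable.subtype _), tsum_singleton]
  ring

section Weights

variable {a b : ℕ+ → ℝ}

lemma hasSum_of_eq_inv_two_pow (ha : ∀ j : ℕ+, a j = 1 / 2 ^ (j : ℕ)) : HasSum a 1 := by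
  rw [← Equiv.pnatEquivNat.symm.hasSum_iff]
  convert hasSum_geometric_two' 1 using 1
  ext n
  simp only [Function.comp_apply, ha]
  simp [pow_succ]
  ring

lemma b_succPNat_two_mul (hb : ∀ j : ℕ+, b (2 * j - 1) = 1 / 2 ^ ((j : ℕ) - 1) ∧
    b (2 * j) = -(1 / 2 ^ ((j : ℕ) - 1))) (k : ℕ) :
    b (2 * k).succPNat = (1 / 2) ^ k ∧ b (2 * k + 1).succPNat = -(1 / 2) ^ k := by
  have hodd : (2 * k).succPNat = 2 * k.succPNat - 1 := by
    apply PNat.eq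
    rw [PNat.sub_coe, if_pos (by rw [← PNat.coe_lt_coe]; simp; omega)]
    simp
    omega
  have heven : (2 * k + 1).succPNat = 2 * k.succPNat := by
    apply PNat.eq
    simp
    omega
  rw [hodd, heven, (hb _).1, (hb _).2, Nat.succPNat_coe, Nat.succ_sub_one, one_div_pow]
  simp

lemma hasSum_of_alternating_two_pow (hb : ∀ j : ℕ+, b (2 * j - 1) = 1 / 2 ^ ((j : ℕ) - 1) ∧
    b (2 * j) = -(1 / 2 ^ ((j : ℕ) - 1))) : HasSum b 0 := by
  rw [← Equiv.pnatEquivNat.symm.hasSum_iff]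
  have he : HasSum (fun k => (b ∘ Equiv.pnatEquivNat.symm) (2 * k)) 2 := by
    simpa [(b_succPNat_two_mul hb _).1] using hasSum_geometric_two
  have ho : HasSum (fun k => (b ∘ Equiv.pnatEquivNat.symm) (2 * k + 1)) (-2) := by
    simpa [(b_succPNat_two_mul hb _).2] using hasSum_geometric_two.neg
  simpa using he.even_add_odd ho

lemma b_one (hb : ∀ j : ℕ+, b (2 * j - 1) = 1 / 2 ^ ((j : ℕ) - 1) ∧
    b (2 * j) = -(1 / 2 ^ ((j : ℕ) - 1))) : b 1 = 1 :=
  (b_succPNat_two_mul hb 0).1.trans (pow_zero _)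

lemma b_two_mul (hb : ∀ j : ℕ+, b (2 * j - 1) = 1 / 2 ^ ((j : ℕ) - 1) ∧
    b (2 * j) = -(1 / 2 ^ ((j : ℕ) - 1))) (n : ℕ+) : b (2 * n) = -(2 * (1 / 2 ^ (n : ℕ))) := by
  obtain ⟨k, rfl⟩ : ∃ k : ℕ, n = k.succPNat := ⟨n.natPred, n.succPNat_natPred.symm⟩
  rw [(hb _).2, Nat.succPNat_coe, Nat.succ_sub_one, pow_succ]
  field_simp

end Weights

theorem stmt15_general {K : Type*} [Field K] [LinearOrder K] [IsStrictOrderedRing K] (ι : ℝ →+* K)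
    (ε : K) (hε : 0 < ε)
    (a b : ℕ+ → ℝ)
    (ha : ∀ j : ℕ+, a j = 1 / 2 ^ (j : ℕ))
    (hb : ∀ j : ℕ+, b (2 * j - 1) = 1 / 2 ^ ((j : ℕ) - 1) ∧
                    b (2 * j) = -(1 / 2 ^ ((j : ℕ) - 1)))
    (ν : Set ℕ+ → K)
    (hν : ∀ U : Set ℕ+, ν U = ι (∑' j : U, a j.1) + ε * ι (∑' j : U, b j.1)) :
    ¬ ∃ (α : Ordinal) (μ : {β : Ordinal // β < α} → Set ℕ+ → ℝ),
      (∀ i, (∀ U : Set ℕ+, 0 ≤ μ i U) ∧ μ i Set.univ = 1 ∧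
        ∀ U V : Set ℕ+, Disjoint U V → μ i (U ∪ V) = μ i U + μ i V) ∧
      (∀ X Y : ℕ+ → ℝ, ∀ s : Finset ℝ, Set.range X ⊆ ↑s → Set.range Y ⊆ ↑s →
        ((∑ x ∈ s, ι x * ν (X ⁻¹' {x})) ≤ (∑ x ∈ s, ι x * ν (Y ⁻¹' {x})) ↔
          lexLe (fun i => ∑ x ∈ s, x * μ i (X ⁻¹' {x}))
                (fun i => ∑ x ∈ s, x * μ i (Y ⁻¹' {x})))) := by
  rintro ⟨α, μ, hμ, hE⟩
  replace hE : IsExpectationEquiv ι ν μ := hE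
  replace hμ : ∀ i, IsFinAddProb (μ i) := hμ
  have hν₀ : ν ∅ = 0 := by simp [hν]
  have hν₁ : ν {1} = ι (1 / 2) + ε := by simp [hν, ha, b_one hb]
  have hν₁c : ν {1}ᶜ = ι (1 / 2) - ε := by
    rw [hν, (hasSum_of_eq_inv_two_pow ha).tsum_compl_singleton,
      (hasSum_of_alternating_two_pow hb).tsum_compl_singleton, ha, b_one hb]
    norm_num [sub_eq_add_neg]
  have hν₂ : ∀ n : ℕ+, ν {2 * n} = ι ((1 / 2 ^ (n : ℕ)) ^ 2) - ε * ι (2 * (1 / 2 ^ (n : ℕ))) := by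
    intro n
    rw [hν, tsum_singleton, tsum_singleton, ha, b_two_mul hb, PNat.mul_coe, PNat.val_ofNat,
      pow_mul']
    simp
    ring
  refine (hE.le_compl_of_forall_le hν₀ (fun i => (hμ i).empty) {1}
    (hE.forall_le_compl hν₀ hμ {1} fun δ hδ => ?_)).not_gt (by rw [hν₁, hν₁c]; linarith)
  obtain ⟨m, hm⟩ := exists_pow_lt_of_lt_one hδ one_half_lt_one
  refine ⟨1 / 2 ^ (m + 1), ⟨by positivity, lt_of_le_of_lt ?_ hm⟩, {2 * m.succPNat}, ?_⟩
  · rw [← one_div_pow]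
    exact pow_le_pow_of_le_one (by norm_num) (by norm_num) m.le_succ
  · rw [hν₂, hν₁, hν₁c]
    simp only [map_one, map_zero, map_sub, map_add, map_mul, map_pow, map_div₀, map_ofNat,
      Nat.succPNat_coe, Nat.succ_eq_add_one]
    ring

/-- Let `W = {w₁, w₂, …} = ℕ₊` with all subsets measurable, and let `ν` be the nonstandard
probability measure with `ν(w_j) = a_j + b_j ε`, `a_j = 1/2^j`, `b_{2j-1} = 1/2^{j-1}`,
`b_{2j} = -1/2^{j-1}`, `ε` a positive infinitesimal, and
`ν(U) = Σ_{w_j ∈ U} a_j + ε Σ_{w_j ∈ U} b_j`.  Then there is no lexicographic probability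
system `μ⃗` over `(W, 2^W)` that is expectation-equivalent to `ν`. -/
theorem stmt15 {K : Type*} [Field K] [LinearOrder K] [IsStrictOrderedRing K] (ι : ℝ →+* K) (hι : Monotone ι)
    (ε : K) (hε : 0 < ε) (hinf : ∀ r : ℝ, 0 < r → ε < ι r)
    (a b : ℕ+ → ℝ)
    (ha : ∀ j : ℕ+, a j = 1 / 2 ^ (j : ℕ))
    (hb : ∀ j : ℕ+, b (2 * j - 1) = 1 / 2 ^ ((j : ℕ) - 1) ∧
                    b (2 * j) = -(1 / 2 ^ ((j : ℕ) - 1)))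
    (ν : Set ℕ+ → K)
    (hν : ∀ U : Set ℕ+, ν U = ι (∑' j : U, a j.1) + ε * ι (∑' j : U, b j.1)) :
    ¬ ∃ (α : Ordinal) (μ : {β : Ordinal // β < α} → Set ℕ+ → ℝ),
      (∀ i, (∀ U : Set ℕ+, 0 ≤ μ i U) ∧ μ i Set.univ = 1 ∧
        ∀ U V : Set ℕ+, Disjoint U V → μ i (U ∪ V) = μ i U + μ i V) ∧
      (∀ X Y : ℕ+ → ℝ, ∀ s : Finset ℝ, Set.range X ⊆ ↑s → Set.range Y ⊆ ↑s →
        ((∑ x ∈ s, ι x * ν (X ⁻¹' {x})) ≤ (∑ x ∈ s, ι x * ν (Y ⁻¹' {x})) ↔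
          lexLe (fun i => ∑ x ∈ s, x * μ i (X ⁻¹' {x}))
                (fun i => ∑ x ∈ s, x * μ i (Y ⁻¹' {x})))) :=
  stmt15_general ι ε hε a b ha hb ν hν
end

section
/- Let W = {w₁, w₂, w₃, w₄}, let ε be a positive infinitesimal in a non-Archimedean field, and define ν₁(w₁) = 1 − 2ε + ε², ν₁(w₂) = ν₁(w₃) = ε − ε², ν₁(w₄) = ε², and ν₂(w₁) = 1 − 2ε + ε³, ν₂(w₂) = ν₂(w₃) = ε − ε³, ν₂(w₄) = ε³. With U = {w₂, w₄} and V = {w₃, w₄}: U and V are independent with respect to ν₁ (ν₁(U∩V) = ν₁(U)·ν₁(V)) but not independent with respect to ν₂, even though ν₁ ≈ ν₂ (the two measures induce the same comparison of expected values on all real-valued random variables). -/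
/-!
Write `d = Y - X`. Under the weights `(1 - 2ε + εᵏ, ε - εᵏ, ε - εᵏ, εᵏ)` with `k ≥ 2`, the
difference of expectations is `ι d₀ + ε ι (d₁ + d₂ - 2d₀) + εᵏ ι (d₀ - d₁ - d₂ + d₃)`. Because
`ε` is a positive infinitesimal, the sign of such an expression is the lexicographic sign of its
three real coefficients, which does not depend on `k`; hence `ν₁ ≈ ν₂`. On the other hand
`ν(U) = ν(V) = ε` and `ν(U ∩ V) = εᵏ`, so `U` and `V` are independent exactly when `k = 2`.
-/

open Finset

section Infinitesimal

variable {K : Type*} [Field K] [LinearOrder K] [IsStrictOrderedRing K] (ι : ℝ →+* K)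

lemma strictMono_ringHom_real : StrictMono ι :=
  (ringHom_monotone (fun _ ↦ Real.isSquare_iff.mpr) ι).strictMono_of_injective ι.injective

lemma abs_map_real_le (r : ℝ) : |ι r| ≤ ι |r| := by
  have hmono := (strictMono_ringHom_real ι).monotone
  exact abs_le.2 ⟨by simpa using hmono (neg_abs_le r), hmono (le_abs_self r)⟩

variable {ι} {ε : K} (hε : 0 < ε) (hinf : ∀ r : ℝ, 0 < r → ε < ι r)
include hε hinf

lemma abs_mul_lt_of_infinitesimal {x : K} {M a : ℝ} (hx : |x| ≤ ι M) (ha : 0 < a) :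
    |ε * x| < ι a := by
  have hmono := strictMono_ringHom_real ι
  have hM : 0 < ι (|M| + 1) := by simpa using hmono (by positivity : (0 : ℝ) < |M| + 1)
  calc |ε * x| = ε * |x| := by rw [abs_mul, abs_of_pos hε]
    _ ≤ ε * ι (|M| + 1) := by
        gcongr
        exact hx.trans (hmono.monotone (by linarith [le_abs_self M]))
    _ < ι (a / (|M| + 1)) * ι (|M| + 1) := by gcongr; exact hinf _ (by positivity)
    _ = ι a := by rw [← map_mul, div_mul_cancel₀ _ (by positivity)]

lemma nonneg_add_mul_iff_of_infinitesimal {x : K} {M : ℝ} (hx : |x| ≤ ι M) (a : ℝ) :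
    0 ≤ ι a + ε * x ↔ 0 < a ∨ a = 0 ∧ 0 ≤ x := by
  rcases lt_trichotomy a 0 with ha | rfl | ha
  · have := abs_mul_lt_of_infinitesimal hε hinf hx (neg_pos.2 ha)
    rw [map_neg] at this
    simp only [ha.not_gt, ha.ne, false_and, or_self, iff_false, not_le]
    linarith [le_abs_self (ε * x)]
  · simp [mul_nonneg_iff_of_pos_left hε]
  · have := abs_mul_lt_of_infinitesimal hε hinf hx ha
    simp only [ha, true_or, iff_true]
    linarith [neg_abs_le (ε * x)]

lemma nonneg_lex_iff_of_infinitesimal (a b c : ℝ) {δ : K} (hδ₀ : 0 < δ) (hδ₁ : δ ≤ 1) :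
    0 ≤ ι a + ε * (ι b + ε * (δ * ι c)) ↔ 0 < a ∨ a = 0 ∧ (0 < b ∨ b = 0 ∧ 0 ≤ c) := by
  have hc : |δ * ι c| ≤ ι |c| := by
    rw [abs_mul, abs_of_pos hδ₀]
    exact (mul_le_of_le_one_left (abs_nonneg _) hδ₁).trans (abs_map_real_le ι c)
  have hbc : |ι b + ε * (δ * ι c)| ≤ ι (|b| + 1) := by
    rw [map_add, map_one]
    exact (abs_add_le _ _).trans (add_le_add (abs_map_real_le ι b)
      (by simpa using (abs_mul_lt_of_infinitesimal hε hinf hc one_pos).le))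
  rw [nonneg_add_mul_iff_of_infinitesimal hε hinf hbc,
    nonneg_add_mul_iff_of_infinitesimal hε hinf hc, mul_nonneg_iff_of_pos_left hδ₀,
    ← map_zero ι, (strictMono_ringHom_real ι).le_iff_le]

end Infinitesimal

def epsWeights {R : Type*} [CommRing R] (ε : R) (k : ℕ) : Fin 4 → R :=
  ![1 - 2 * ε + ε ^ k, ε - ε ^ k, ε - ε ^ k, ε ^ k]

lemma epsWeights_indep_iff {R : Type*} [CommRing R] (ε : R) (k : ℕ) :
    (∑ i ∈ ({1, 3} : Finset (Fin 4)) ∩ {2, 3}, epsWeights ε k i) =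
        (∑ i ∈ ({1, 3} : Finset (Fin 4)), epsWeights ε k i) *
          (∑ i ∈ ({2, 3} : Finset (Fin 4)), epsWeights ε k i) ↔ ε ^ k = ε ^ 2 := by
  have hUV : ({1, 3} : Finset (Fin 4)) ∩ {2, 3} = {3} := by decide
  rw [hUV, sum_singleton, sum_pair (by decide), sum_pair (by decide)]
  simp [epsWeights, sq]

lemma sum_epsWeights_mul_le_iff {K : Type*} [Field K] [LinearOrder K] [IsStrictOrderedRing K]
    {ι : ℝ →+* K} {ε : K} (hε : 0 < ε)
    (hinf : ∀ r : ℝ, 0 < r → ε < ι r) {k : ℕ} (hk : 2 ≤ k) (X Y : Fin 4 → ℝ) :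
    (∑ w, epsWeights ε k w * ι (X w)) ≤ ∑ w, epsWeights ε k w * ι (Y w) ↔
      let Z := Y - X
      0 < Z 0 ∨ Z 0 = 0 ∧ (0 < Z 1 + Z 2 - 2 * Z 0 ∨
        Z 1 + Z 2 - 2 * Z 0 = 0 ∧ 0 ≤ Z 0 - Z 1 - Z 2 + Z 3) := by
  have hε₁ : ε < 1 := by simpa using hinf 1 one_pos
  obtain ⟨j, rfl⟩ := Nat.exists_eq_add_of_le' hk
  rw [← sub_nonneg, ← sum_sub_distrib]
  simp_rw [← mul_sub, ← map_sub]
  rw [← nonneg_lex_iff_of_infinitesimal hε hinf _ _ _ (pow_pos hε j) (pow_le_one₀ hε.le hε₁.le)]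
  simp only [Fin.sum_univ_four, epsWeights, Matrix.cons_val, Pi.sub_apply, map_sub, map_add,
    map_mul, map_ofNat]
  ring_nf

theorem stmt18_general {K : Type*} [Field K] [LinearOrder K] [IsStrictOrderedRing K] (ι : ℝ →+* K)
    (ε : K) (hε : 0 < ε) (hinf : ∀ r : ℝ, 0 < r → ε < ι r)
    (p₁ p₂ : Fin 4 → K)
    (h₁ : p₁ 0 = 1 - 2 * ε + ε ^ 2 ∧ p₁ 1 = ε - ε ^ 2 ∧ p₁ 2 = ε - ε ^ 2 ∧ p₁ 3 = ε ^ 2)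
    (h₂ : p₂ 0 = 1 - 2 * ε + ε ^ 3 ∧ p₂ 1 = ε - ε ^ 3 ∧ p₂ 2 = ε - ε ^ 3 ∧ p₂ 3 = ε ^ 3) :
    (∑ i ∈ ({1, 3} : Finset (Fin 4)) ∩ ({2, 3} : Finset (Fin 4)), p₁ i) =
        (∑ i ∈ ({1, 3} : Finset (Fin 4)), p₁ i) * (∑ i ∈ ({2, 3} : Finset (Fin 4)), p₁ i) ∧
    (∑ i ∈ ({1, 3} : Finset (Fin 4)) ∩ ({2, 3} : Finset (Fin 4)), p₂ i) ≠
        (∑ i ∈ ({1, 3} : Finset (Fin 4)), p₂ i) * (∑ i ∈ ({2, 3} : Finset (Fin 4)), p₂ i) ∧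
    (∀ X Y : Fin 4 → ℝ,
      ((∑ w, p₁ w * ι (X w)) ≤ (∑ w, p₁ w * ι (Y w)) ↔
       (∑ w, p₂ w * ι (X w)) ≤ (∑ w, p₂ w * ι (Y w)))) := by
  have hp₁ : p₁ = epsWeights ε 2 := by funext i; fin_cases i <;> simp [epsWeights, h₁]
  have hp₂ : p₂ = epsWeights ε 3 := by funext i; fin_cases i <;> simp [epsWeights, h₂]
  subst hp₁ hp₂
  have hε₁ : ε < 1 := by simpa using hinf 1 one_pos
  refine ⟨(epsWeights_indep_iff ε 2).2 rfl,
    fun h ↦ (pow_right_strictAnti₀ hε hε₁ (by norm_num : 2 < 3)).ne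
      ((epsWeights_indep_iff ε 3).1 h),
    fun X Y ↦ ?_⟩
  rw [sum_epsWeights_mul_le_iff hε hinf le_rfl, sum_epsWeights_mul_le_iff hε hinf (by norm_num)]

/-- Let `W = {w₁,w₂,w₃,w₄}` (here `Fin 4`), `ε` a positive infinitesimal in a
non-Archimedean ordered field extension of `ℝ`, and `ν₁, ν₂` the nonstandard probability
measures with `ν₁ = (1-2ε+ε², ε-ε², ε-ε², ε²)` and `ν₂ = (1-2ε+ε³, ε-ε³, ε-ε³, ε³)`.
With `U = {w₂,w₄}` and `V = {w₃,w₄}`: `U` and `V` are independent with respect to `ν₁`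
but not with respect to `ν₂`, even though `ν₁ ≈ ν₂` (the two measures induce the same
comparison of expected values on all real-valued random variables). -/
theorem stmt18 {K : Type*} [Field K] [LinearOrder K] [IsStrictOrderedRing K] (ι : ℝ →+* K) (hι : Monotone ι)
    (ε : K) (hε : 0 < ε) (hinf : ∀ r : ℝ, 0 < r → ε < ι r)
    (p₁ p₂ : Fin 4 → K)
    (h₁ : p₁ 0 = 1 - 2 * ε + ε ^ 2 ∧ p₁ 1 = ε - ε ^ 2 ∧ p₁ 2 = ε - ε ^ 2 ∧ p₁ 3 = ε ^ 2)
    (h₂ : p₂ 0 = 1 - 2 * ε + ε ^ 3 ∧ p₂ 1 = ε - ε ^ 3 ∧ p₂ 2 = ε - ε ^ 3 ∧ p₂ 3 = ε ^ 3) :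
    (∑ i ∈ ({1, 3} : Finset (Fin 4)) ∩ ({2, 3} : Finset (Fin 4)), p₁ i) =
        (∑ i ∈ ({1, 3} : Finset (Fin 4)), p₁ i) * (∑ i ∈ ({2, 3} : Finset (Fin 4)), p₁ i) ∧
    (∑ i ∈ ({1, 3} : Finset (Fin 4)) ∩ ({2, 3} : Finset (Fin 4)), p₂ i) ≠
        (∑ i ∈ ({1, 3} : Finset (Fin 4)), p₂ i) * (∑ i ∈ ({2, 3} : Finset (Fin 4)), p₂ i) ∧
    (∀ X Y : Fin 4 → ℝ,
      ((∑ w, p₁ w * ι (X w)) ≤ (∑ w, p₁ w * ι (Y w)) ↔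
       (∑ w, p₂ w * ι (X w)) ≤ (∑ w, p₂ w * ι (Y w)))) :=
  stmt18_general ι ε hε hinf p₁ p₂ h₁ h₂
end

section
/- Approximate independence of events with respect to a nonstandard probability measure need not be symmetric: for ν₁ on W = {w₁, w₂, w₃, w₄} defined by ν₁(w₁) = 1 − 2ε + ε², ν₁(w₂) = ν₁(w₃) = ε − ε², ν₁(w₄) = ε² (ε a positive infinitesimal), with U = {w₂, w₄} and V' = {w₄}: U is approximately independent of V' (st(ν₁(V' | U)) = st(ν₁(V'))), but V' is not approximately independent of U (st(ν₁(U | V')) = 1 ≠ 0 = st(ν₁(U))). -/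
section StandardPart

variable {K : Type*} [Field K] [LinearOrder K] [IsStrictOrderedRing K]

-- Nonnegative reals are squares, and ring homomorphisms preserve squares.
theorem RingHom.monotone_of_real (ι : ℝ →+* K) : Monotone ι := by
  intro x y hxy
  have hsq : ι (y - x) = ι (Real.sqrt (y - x)) ^ 2 := by
    rw [← map_pow, Real.sq_sqrt (sub_nonneg.mpr hxy)]
  have : 0 ≤ ι y - ι x := by
    rw [← map_sub, hsq]
    exact sq_nonneg _
  linarith

theorem RingHom.strictMono_of_real (ι : ℝ →+* K) : StrictMono ι :=
  ι.monotone_of_real.strictMono_of_injective ι.injective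

theorem stPart_map (ι : ℝ →+* K) (r : ℝ) : stPart ι (ι r) = r := by
  have hset : {a : ℝ | ι r ≤ ι a} = Set.Ici r := by
    ext a
    exact ι.strictMono_of_real.le_iff_le
  rw [stPart, hset, csInf_Ici]

theorem stPart_eq_zero_of_infinitesimal (ι : ℝ →+* K) {b : K} (hb : 0 < b)
    (h : ∀ r : ℝ, 0 < r → b ≤ ι r) : stPart ι b = 0 := by
  have hset : {a : ℝ | b ≤ ι a} = Set.Ioi 0 := by
    ext a
    refine ⟨fun ha => ?_, h a⟩
    by_contra hle
    have : ι a ≤ 0 := map_zero ι ▸ ι.monotone_of_real (not_lt.mp hle)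
    exact absurd (hb.trans_le ha) this.not_gt
  rw [stPart, hset, csInf_Ioi]

end StandardPart

theorem stmt19_general {K : Type*} [Field K] [LinearOrder K] [IsStrictOrderedRing K] (ι : ℝ →+* K)
    (ε : K) (hε : 0 < ε) (hinf : ∀ r : ℝ, 0 < r → ε < ι r)
    (p : Fin 4 → K)
    (hp : p 0 = 1 - 2 * ε + ε ^ 2 ∧ p 1 = ε - ε ^ 2 ∧ p 2 = ε - ε ^ 2 ∧ p 3 = ε ^ 2) :
    -- `st(ν₁(V' | U)) = st(ν₁(V'))`  (U = {w₂,w₄}, V' = {w₄}, ν₁(U) = p 1 + p 3)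
    stPart ι (p 3 / (p 1 + p 3)) = stPart ι (p 3) ∧
    -- `st(ν₁(U | V')) = 1`
    stPart ι (p 3 / p 3) = 1 ∧
    -- `st(ν₁(U)) = 0`, so `V'` is not approximately independent of `U`
    stPart ι (p 1 + p 3) = 0 ∧ (1 : ℝ) ≠ 0 := by
  obtain ⟨-, hp1, -, hp3⟩ := hp
  have hU : p 1 + p 3 = ε := by rw [hp1, hp3]; ring
  have hε_lt_one : ε < 1 := by simpa using hinf 1 one_pos
  have hst_ε : stPart ι ε = 0 :=
    stPart_eq_zero_of_infinitesimal ι hε fun r hr => (hinf r hr).le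
  have hst_ε_sq : stPart ι (ε ^ 2) = 0 :=
    stPart_eq_zero_of_infinitesimal ι (by positivity) fun r hr => by nlinarith [hinf r hr]
  have hVU : p 3 / (p 1 + p 3) = ε := by rw [hU, hp3]; field_simp
  have hUV : p 3 / p 3 = ι 1 := by rw [map_one, hp3]; exact div_self (by positivity)
  refine ⟨?_, ?_, ?_, one_ne_zero⟩
  · rw [hVU, hp3, hst_ε, hst_ε_sq]
  · rw [hUV, stPart_map]
  · rw [hU, hst_ε]

/-- Approximate independence of events w.r.t. a nonstandard probability measure need not be
symmetric: for `ν₁` on `W = {w₁,w₂,w₃,w₄}` (here `Fin 4`) given by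
`ν₁ = (1-2ε+ε², ε-ε², ε-ε², ε²)`, with `U = {w₂,w₄}` and `V' = {w₄}`:
`U` is approximately independent of `V'` (`st(ν₁(V' | U)) = st(ν₁(V'))`), but `V'` is not
approximately independent of `U` (`st(ν₁(U | V')) = 1 ≠ 0 = st(ν₁(U))`). -/
theorem stmt19 {K : Type*} [Field K] [LinearOrder K] [IsStrictOrderedRing K] (ι : ℝ →+* K) (hι : Monotone ι)
    (ε : K) (hε : 0 < ε) (hinf : ∀ r : ℝ, 0 < r → ε < ι r)
    (p : Fin 4 → K)
    (hp : p 0 = 1 - 2 * ε + ε ^ 2 ∧ p 1 = ε - ε ^ 2 ∧ p 2 = ε - ε ^ 2 ∧ p 3 = ε ^ 2) :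
    -- `st(ν₁(V' | U)) = st(ν₁(V'))`  (U = {w₂,w₄}, V' = {w₄}, ν₁(U) = p 1 + p 3)
    stPart ι (p 3 / (p 1 + p 3)) = stPart ι (p 3) ∧
    -- `st(ν₁(U | V')) = 1`
    stPart ι (p 3 / p 3) = 1 ∧
    -- `st(ν₁(U)) = 0`, so `V'` is not approximately independent of `U`
    stPart ι (p 1 + p 3) = 0 ∧ (1 : ℝ) ≠ 0 :=
  stmt19_general ι ε hε hinf p hp
end
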